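/- arXiv:2509.14598 — 4 statements merged into one kernel-verified Lean document; each statement's English description precedes it below -/
import Mathlib

section
/- Under the stepped-wedge randomization, for two distinct clusters in two ordered periods the joint assignment probabilities are: for any clusters i ≠ i′ in {1,…,I} and periods j < j′ in {1,…,J}, one has P(Z_{ij} = 1 and Z_{i′j′} = 1) = (I_j/I)·((I_{j′} − 1)/(I − 1)), P(Z_{ij} = 0 and Z_{i′j′} = 1) = ((I_{j′} − I_j)/I)·((I_{j′} − 1)/(I − 1)) + (1 − I_{j′}/I)·(I_{j′}/(I − 1)), P(Z_{ij} = 0 and Z_{i′j′} = 0) = (1 − I_{j′}/I)·((I − I_j − 1)/(I − 1)), and P(Z_{ij} = 1 and Z_{i′j′} = 0) = (I_j/I)·((I − I_{j′})/(I − 1)). -/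
open Finset
open scoped Classical

noncomputable section

/-- Probability of an event under the uniform random permutation of `Fin I`
(each of the `I!` permutations has probability `1/I!`). -/
def swProb (I : ℕ) (p : Equiv.Perm (Fin I) → Prop) : ℝ :=
  ((Finset.univ.filter p).card : ℝ) / (Nat.factorial I : ℝ)

/-- Expectation of a real statistic under the uniform random permutation of `Fin I`. -/
def swExp (I : ℕ) (f : Equiv.Perm (Fin I) → ℝ) : ℝ :=
  (∑ σ : Equiv.Perm (Fin I), f σ) / (Nat.factorial I : ℝ)

/-- Variance with respect to the uniform random permutation. -/
def swVar (I : ℕ) (f : Equiv.Perm (Fin I) → ℝ) : ℝ :=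
  swExp I (fun σ => (f σ - swExp I f) ^ 2)

/-- Covariance with respect to the uniform random permutation. -/
def swCov (I : ℕ) (f g : Equiv.Perm (Fin I) → ℝ) : ℝ :=
  swExp I (fun σ => (f σ - swExp I f) * (g σ - swExp I g))

/-- Treatment indicator: cluster `i` is treated in period `j` iff its position
`σ(i) + 1` (in `{1,…,I}`) is at most the treated count `T j`. -/
def swZ (I : ℕ) (T : ℕ → ℕ) (σ : Equiv.Perm (Fin I)) (i : Fin I) (j : ℕ) : ℕ :=
  if (σ i : ℕ) < T j then 1 else 0

/-- Cluster-level propensity score `e_j = I_j / I`. -/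
def swE (I : ℕ) (T : ℕ → ℕ) (j : ℕ) : ℝ := (T j : ℝ) / (I : ℝ)

/-- Joint probability that both cluster-periods are treated. -/
def swE11 (I : ℕ) (T : ℕ → ℕ) (p q : Fin I × ℕ) : ℝ :=
  swProb I (fun σ => swZ I T σ p.1 p.2 = 1 ∧ swZ I T σ q.1 q.2 = 1)

/-- Joint probability that both cluster-periods are untreated. -/
def swE00 (I : ℕ) (T : ℕ → ℕ) (p q : Fin I × ℕ) : ℝ :=
  swProb I (fun σ => swZ I T σ p.1 p.2 = 0 ∧ swZ I T σ q.1 q.2 = 0)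

/-- Joint probability that the first cluster-period is treated and the second untreated. -/
def swE10 (I : ℕ) (T : ℕ → ℕ) (p q : Fin I × ℕ) : ℝ :=
  swProb I (fun σ => swZ I T σ p.1 p.2 = 1 ∧ swZ I T σ q.1 q.2 = 0)

/-- Treated-arm Horvitz–Thompson estimator. -/
def tauHat1 (I J : ℕ) (T : ℕ → ℕ) (N : ℝ) (r1 : Fin I → ℕ → ℝ)
    (σ : Equiv.Perm (Fin I)) : ℝ :=
  (1 / N) * ∑ i : Fin I, ∑ j ∈ Finset.Icc 1 J, (swZ I T σ i j : ℝ) * r1 i j / swE I T j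

/-- Control-arm Horvitz–Thompson estimator. -/
def tauHat0 (I J : ℕ) (T : ℕ → ℕ) (N : ℝ) (r0 : Fin I → ℕ → ℝ)
    (σ : Equiv.Perm (Fin I)) : ℝ :=
  (1 / N) * ∑ i : Fin I, ∑ j ∈ Finset.Icc 1 J,
    (1 - (swZ I T σ i j : ℝ)) * r0 i j / (1 - swE I T j)

/-- Horvitz–Thompson estimator of the residualized average treatment effect. -/
def tauHatD (I J : ℕ) (T : ℕ → ℕ) (N : ℝ) (r1 r0 : Fin I → ℕ → ℝ)
    (σ : Equiv.Perm (Fin I)) : ℝ :=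
  (1 / N) * ∑ i : Fin I, ∑ j ∈ Finset.Icc 1 J,
    ((swZ I T σ i j : ℝ) * r1 i j / swE I T j
      - (1 - (swZ I T σ i j : ℝ)) * r0 i j / (1 - swE I T j))

/-- Treated-arm variance estimator. -/
def varHat1 (I J : ℕ) (T : ℕ → ℕ) (N : ℝ) (r1 : Fin I → ℕ → ℝ)
    (σ : Equiv.Perm (Fin I)) : ℝ :=
  (1 / N ^ 2) *
    ((∑ p ∈ Finset.univ ×ˢ Finset.Icc 1 J,
        (swZ I T σ p.1 p.2 : ℝ) * ((1 - swE I T p.2) / (swE I T p.2) ^ 2) * (r1 p.1 p.2) ^ 2)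
      + (∑ p ∈ Finset.univ ×ˢ Finset.Icc 1 J, ∑ q ∈ Finset.univ ×ˢ Finset.Icc 1 J,
          if p ≠ q ∧ 0 < swE11 I T p q then
            (swZ I T σ p.1 p.2 : ℝ) * (swZ I T σ q.1 q.2 : ℝ) *
              ((swE11 I T p q - swE I T p.2 * swE I T q.2) /
                (swE11 I T p q * swE I T p.2 * swE I T q.2)) *
              r1 p.1 p.2 * r1 q.1 q.2
          else 0)
      + (∑ p ∈ Finset.univ ×ˢ Finset.Icc 1 J, ∑ q ∈ Finset.univ ×ˢ Finset.Icc 1 J,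
          if p ≠ q ∧ swE11 I T p q = 0 then
            (swZ I T σ p.1 p.2 : ℝ) * (r1 p.1 p.2) ^ 2 / (2 * swE I T p.2)
              + (swZ I T σ q.1 q.2 : ℝ) * (r1 q.1 q.2) ^ 2 / (2 * swE I T q.2)
          else 0))

/-- Control-arm variance estimator. -/
def varHat0 (I J : ℕ) (T : ℕ → ℕ) (N : ℝ) (r0 : Fin I → ℕ → ℝ)
    (σ : Equiv.Perm (Fin I)) : ℝ :=
  (1 / N ^ 2) *
    ((∑ p ∈ Finset.univ ×ˢ Finset.Icc 1 J,
        (1 - (swZ I T σ p.1 p.2 : ℝ)) * (swE I T p.2 / (1 - swE I T p.2) ^ 2) * (r0 p.1 p.2) ^ 2)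
      + (∑ p ∈ Finset.univ ×ˢ Finset.Icc 1 J, ∑ q ∈ Finset.univ ×ˢ Finset.Icc 1 J,
          if p ≠ q ∧ 0 < swE00 I T p q then
            (1 - (swZ I T σ p.1 p.2 : ℝ)) * (1 - (swZ I T σ q.1 q.2 : ℝ)) *
              ((swE00 I T p q - (1 - swE I T p.2) * (1 - swE I T q.2)) /
                (swE00 I T p q * (1 - swE I T p.2) * (1 - swE I T q.2))) *
              r0 p.1 p.2 * r0 q.1 q.2
          else 0)
      + (∑ p ∈ Finset.univ ×ˢ Finset.Icc 1 J, ∑ q ∈ Finset.univ ×ˢ Finset.Icc 1 J,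
          if p ≠ q ∧ swE00 I T p q = 0 then
            (1 - (swZ I T σ p.1 p.2 : ℝ)) * (r0 p.1 p.2) ^ 2 / (2 * (1 - swE I T p.2))
              + (1 - (swZ I T σ q.1 q.2 : ℝ)) * (r0 q.1 q.2) ^ 2 / (2 * (1 - swE I T q.2))
          else 0))

/-- Covariance estimator. -/
def covHat (I J : ℕ) (T : ℕ → ℕ) (N : ℝ) (r1 r0 : Fin I → ℕ → ℝ)
    (σ : Equiv.Perm (Fin I)) : ℝ :=
  -(1 / N ^ 2) *
      (∑ p ∈ Finset.univ ×ˢ Finset.Icc 1 J, ∑ q ∈ Finset.univ ×ˢ Finset.Icc 1 J,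
        if swE10 I T p q = 0 then
          (swZ I T σ p.1 p.2 : ℝ) * (r1 p.1 p.2) ^ 2 / (2 * swE I T p.2)
            + (1 - (swZ I T σ q.1 q.2 : ℝ)) * (r0 q.1 q.2) ^ 2 / (2 * (1 - swE I T q.2))
        else 0)
    + (1 / N ^ 2) *
      (∑ p ∈ Finset.univ ×ˢ Finset.Icc 1 J, ∑ q ∈ Finset.univ ×ˢ Finset.Icc 1 J,
        if p ≠ q ∧ 0 < swE10 I T p q then
          (swZ I T σ p.1 p.2 : ℝ) * (1 - (swZ I T σ q.1 q.2 : ℝ)) *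
            ((swE10 I T p q - swE I T p.2 * (1 - swE I T q.2)) /
              (swE10 I T p q * swE I T p.2 * (1 - swE I T q.2))) *
            r1 p.1 p.2 * r0 q.1 q.2
        else 0)

/-- The adoption period of a cluster placed `l`-th in line:
`P_l = min { j ∈ {1,…,J} : l ≤ I_j }` if `l ≤ I_J`, and `J + 1` otherwise. -/
def swP (J : ℕ) (T : ℕ → ℕ) (l : ℕ) : ℕ :=
  if l ≤ T J then sInf {j | 1 ≤ j ∧ j ≤ J ∧ l ≤ T j} else J + 1

/-- The combinatorial matrix entry `c(i, l)`. -/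
def swC (I J : ℕ) (T : ℕ → ℕ) (N : ℝ) (r1 r0 : Fin I → ℕ → ℝ)
    (i : Fin I) (l : ℕ) : ℝ :=
  (1 / N) * ((∑ j ∈ Finset.Icc (swP J T l) J, r1 i j / swE I T j)
    - ∑ j ∈ Finset.Icc 1 (swP J T l - 1), r0 i j / (1 - swE I T j))


section AuxSW
open Equiv

variable {I : ℕ}


def fiber (i i' : Fin I) (a b : Fin I) : Finset (Perm (Fin I)) :=
  univ.filter (fun σ => σ i = a ∧ σ i' = b)

lemma fiber_card_eq (i i' : Fin I) (hii' : i ≠ i') {a b a' b' : Fin I}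
    (hab : a ≠ b) (hab' : a' ≠ b') :
    (fiber i i' a b).card = (fiber i i' a' b').card := by
  set t1 := Equiv.swap a a' with ht1
  set τ := Equiv.swap (t1 b) b' * t1 with hτ
  have hτa : τ a = a' := by
    have h1 : t1 a = a' := Equiv.swap_apply_left a a'
    have h2 : t1 b ≠ a' := by
      rw [← h1]; exact fun h => hab (t1.injective h).symm
    simp only [hτ, Perm.mul_apply, h1]
    rw [Equiv.swap_apply_of_ne_of_ne (Ne.symm h2) hab']
  have hτb : τ b = b' := by
    simp only [hτ, Perm.mul_apply]
    exact Equiv.swap_apply_left _ _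
  apply Finset.card_bij' (fun σ _ => τ * σ) (fun σ _ => τ⁻¹ * σ)
  · intro σ hσ
    simp only [fiber, mem_filter, mem_univ, true_and] at hσ ⊢
    simp [Perm.mul_apply, hσ.1, hσ.2, hτa, hτb]
  · intro σ hσ
    simp only [fiber, mem_filter, mem_univ, true_and] at hσ ⊢
    constructor
    · simp [Perm.mul_apply]; rw [hσ.1, ← hτa]; simp
    · simp [Perm.mul_apply]; rw [hσ.2, ← hτb]; simp
  · intro σ _; simp [mul_assoc]
  · intro σ _; simp [mul_assoc]

lemma fiber_nonempty (i i' : Fin I) (hii' : i ≠ i') {a b : Fin I} (hab : a ≠ b) :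
    (fiber i i' a b).Nonempty := by
  set t1 := Equiv.swap i a with ht1
  set τ := Equiv.swap (t1 i') b * t1 with hτ
  have hτa : τ i = a := by
    have h1 : t1 i = a := Equiv.swap_apply_left i a
    have h2 : t1 i' ≠ a := by
      rw [← h1]; exact fun h => hii' (t1.injective h).symm
    simp only [hτ, Perm.mul_apply, h1]
    rw [Equiv.swap_apply_of_ne_of_ne (Ne.symm h2) hab]
  have hτb : τ i' = b := by
    simp only [hτ, Perm.mul_apply]; exact Equiv.swap_apply_left _ _
  exact ⟨τ, by simp [fiber, hτa, hτb]⟩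

/-- key counting lemma -/
lemma key_count (hI : 2 ≤ I) (i i' : Fin I) (hii' : i ≠ i') (P Q : Fin I → Prop) :
    ((univ.filter (fun σ : Perm (Fin I) => P (σ i) ∧ Q (σ i'))).card) * (I * (I - 1))
      = ((((univ.filter P) ×ˢ (univ.filter Q)).filter (fun p => p.1 ≠ p.2)).card) * Nat.factorial I := by
  classical
  set D : Finset (Fin I × Fin I) := (univ : Finset (Fin I)).offDiag with hD
  have hmemD : ∀ p : Fin I × Fin I, p ∈ D ↔ p.1 ≠ p.2 := by
    intro p; simp [hD, Finset.mem_offDiag]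
  -- a reference pair
  obtain ⟨a0, b0, hab0⟩ : ∃ a b : Fin I, a ≠ b := by
    have : 1 < I := hI
    exact ⟨⟨0, by omega⟩, ⟨1, by omega⟩, by simp [Fin.ext_iff]⟩
  set c := (fiber i i' a0 b0).card with hc
  -- partition of all permutations
  have hpart : Nat.factorial I = D.card * c := by
    have h1 : (univ : Finset (Perm (Fin I))).card = Nat.factorial I := by
      rw [Finset.card_univ, Fintype.card_perm, Fintype.card_fin]
    have h2 : (univ : Finset (Perm (Fin I))).card
        = ∑ p ∈ D, ((univ : Finset (Perm (Fin I))).filter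
            (fun σ => (σ i, σ i') = p)).card := by
      apply Finset.card_eq_sum_card_fiberwise
      intro σ _
      rw [Finset.mem_coe, hmemD]
      exact fun h => hii' (σ.injective h)
    have h3 : ∀ p ∈ D, ((univ : Finset (Perm (Fin I))).filter
        (fun σ => (σ i, σ i') = p)).card = c := by
      intro p hp
      have : ((univ : Finset (Perm (Fin I))).filter (fun σ => (σ i, σ i') = p))
          = fiber i i' p.1 p.2 := by
        ext σ; simp [fiber, Prod.ext_iff]
      rw [this, hc]
      exact fiber_card_eq i i' hii' ((hmemD p).1 hp) hab0
    rw [← h1, h2, Finset.sum_congr rfl h3, Finset.sum_const, smul_eq_mul]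
  have hDcard : D.card = I * (I - 1) := by
    rw [hD, Finset.offDiag_card, Finset.card_univ, Fintype.card_fin]
    cases I with
    | zero => rfl
    | succ n => simp [Nat.succ_sub_one, Nat.mul_sub_one]; ring_nf; omega
  -- the filtered count
  set S := (((univ.filter P) ×ˢ (univ.filter Q)).filter (fun p : Fin I × Fin I => p.1 ≠ p.2))
    with hS
  have hcount : ((univ.filter (fun σ : Perm (Fin I) => P (σ i) ∧ Q (σ i'))).card)
      = S.card * c := by
    have h2 : ((univ.filter (fun σ : Perm (Fin I) => P (σ i) ∧ Q (σ i'))).card)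
        = ∑ p ∈ S, (((univ.filter (fun σ : Perm (Fin I) => P (σ i) ∧ Q (σ i')))).filter
            (fun σ => (σ i, σ i') = p)).card := by
      apply Finset.card_eq_sum_card_fiberwise
      intro σ hσ
      simp only [Finset.mem_coe, mem_filter, mem_univ, true_and] at hσ
      simp only [Finset.mem_coe, hS, mem_filter, Finset.mem_product, mem_univ, true_and]
      exact ⟨⟨by simp [hσ.1], by simp [hσ.2]⟩, fun h => hii' (σ.injective h)⟩
    have h3 : ∀ p ∈ S, (((univ.filter (fun σ : Perm (Fin I) => P (σ i) ∧ Q (σ i')))).filter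
        (fun σ => (σ i, σ i') = p)).card = c := by
      intro p hp
      simp only [hS, mem_filter, Finset.mem_product, mem_univ, true_and] at hp
      have : (((univ.filter (fun σ : Perm (Fin I) => P (σ i) ∧ Q (σ i')))).filter
          (fun σ => (σ i, σ i') = p)) = fiber i i' p.1 p.2 := by
        ext σ
        simp only [fiber, mem_filter, mem_univ, true_and, Prod.ext_iff]
        constructor
        · rintro ⟨_, h1, h2⟩; exact ⟨h1, h2⟩
        · rintro ⟨h1, h2⟩
          refine ⟨⟨?_, ?_⟩, h1, h2⟩
          · rw [h1]; simpa using hp.1.1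
          · rw [h2]; simpa using hp.1.2
      rw [this, hc]
      exact fiber_card_eq i i' hii' hp.2 hab0
    rw [h2, Finset.sum_congr rfl h3, Finset.sum_const, smul_eq_mul]
  rw [hcount, hpart, hDcard]
  ring

lemma S_card (A B : Finset (Fin I)) :
    ((A ×ˢ B).filter (fun p : Fin I × Fin I => p.1 ≠ p.2)).card
      = A.card * B.card - (A ∩ B).card := by
  classical
  have h1 : ((A ×ˢ B).filter (fun p : Fin I × Fin I => p.1 = p.2)).card = (A ∩ B).card := by
    apply Finset.card_bij (fun p _ => p.1)
    · intro p hp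
      simp only [mem_filter, Finset.mem_product] at hp
      simp only [Finset.mem_inter]
      exact ⟨hp.1.1, hp.2 ▸ hp.1.2⟩
    · intro p hp q hq h
      simp only [mem_filter] at hp hq
      exact Prod.ext h (by rw [← hp.2, ← hq.2, h])
    · intro a ha
      simp only [Finset.mem_inter] at ha
      exact ⟨(a, a), by simp [ha.1, ha.2], rfl⟩
  have h2 := Finset.card_filter_add_card_filter_not
    (s := A ×ˢ B) (p := fun p : Fin I × Fin I => p.1 = p.2)
  simp only [Finset.card_product] at h2
  have : ((A ×ˢ B).filter (fun p : Fin I × Fin I => ¬ p.1 = p.2)).card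
      = A.card * B.card - (A ∩ B).card := by omega
  simpa using this

lemma Iio_card_filter {k : ℕ} (hk : k ≤ I) :
    ((univ : Finset (Fin I)).filter (fun x : Fin I => (x : ℕ) < k)).card = k := by
  rcases Nat.eq_or_lt_of_le hk with h | h
  · have heq : ((univ : Finset (Fin I)).filter (fun x : Fin I => (x : ℕ) < k)) = univ := by
      ext x
      simp only [mem_filter, mem_univ, true_and, iff_true]
      exact lt_of_lt_of_eq x.isLt h.symm
    rw [heq, Finset.card_univ, Fintype.card_fin, h]
  · have : ((univ : Finset (Fin I)).filter (fun x : Fin I => (x : ℕ) < k))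
        = Finset.Iio (⟨k, h⟩ : Fin I) := by
      ext x; simp [Fin.lt_def]
    rw [this, Fin.card_Iio]

lemma Iio_card_filter_not {k : ℕ} (hk : k ≤ I) :
    ((univ : Finset (Fin I)).filter (fun x : Fin I => ¬ (x : ℕ) < k)).card = I - k := by
  have h2 := Finset.card_filter_add_card_filter_not
    (s := (univ : Finset (Fin I))) (p := fun x => (x : ℕ) < k)
  rw [Iio_card_filter hk, Finset.card_univ, Fintype.card_fin] at h2
  omega


lemma prob_eq (hI : 2 ≤ I) (i i' : Fin I) (hii' : i ≠ i') (P Q : Fin I → Prop) :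
    swProb I (fun σ => P (σ i) ∧ Q (σ i'))
      = ((((univ.filter P) ×ˢ (univ.filter Q)).filter
            (fun p : Fin I × Fin I => p.1 ≠ p.2)).card : ℝ) / ((I : ℝ) * ((I : ℝ) - 1)) := by
  have key := key_count hI i i' hii' P Q
  have hfac : (Nat.factorial I : ℝ) ≠ 0 := Nat.cast_ne_zero.2 (Nat.factorial_ne_zero I)
  have h2 : (2 : ℝ) ≤ (I : ℝ) := by exact_mod_cast hI
  have h1 : (1 : ℕ) ≤ I := by omega
  have hden : (I : ℝ) * ((I : ℝ) - 1) ≠ 0 := by nlinarith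
  rw [swProb, div_eq_div_iff hfac hden]
  have hc : ((I * (I - 1) : ℕ) : ℝ) = (I : ℝ) * ((I : ℝ) - 1) := by
    push_cast [Nat.cast_sub h1]; ring
  rw [← hc, ← Nat.cast_mul]
  rw [Finset.filter_congr_decidable]
  rw [key, Nat.cast_mul]

end AuxSW

theorem statement2
    (I J : ℕ) (hI : 2 ≤ I) (hJ : 1 ≤ J)
    (T : ℕ → ℕ)
    (hmono : ∀ j j', 1 ≤ j → j ≤ j' → j' ≤ J → T j ≤ T j')
    (hlb : ∀ j, 1 ≤ j → j ≤ J → 1 ≤ T j)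
    (hub : ∀ j, 1 ≤ j → j ≤ J → T j ≤ I - 1)
    (i i' : Fin I) (hii' : i ≠ i') (j j' : ℕ) (hj1 : 1 ≤ j) (hjj' : j < j') (hj'J : j' ≤ J) :
    swProb I (fun σ => swZ I T σ i j = 1 ∧ swZ I T σ i' j' = 1)
      = ((T j : ℝ) / I) * (((T j' : ℝ) - 1) / ((I : ℝ) - 1)) ∧
    swProb I (fun σ => swZ I T σ i j = 0 ∧ swZ I T σ i' j' = 1)
      = (((T j' : ℝ) - (T j : ℝ)) / I) * (((T j' : ℝ) - 1) / ((I : ℝ) - 1))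
        + (1 - (T j' : ℝ) / I) * ((T j' : ℝ) / ((I : ℝ) - 1)) ∧
    swProb I (fun σ => swZ I T σ i j = 0 ∧ swZ I T σ i' j' = 0)
      = (1 - (T j' : ℝ) / I) * (((I : ℝ) - (T j : ℝ) - 1) / ((I : ℝ) - 1)) ∧
    swProb I (fun σ => swZ I T σ i j = 1 ∧ swZ I T σ i' j' = 0)
      = ((T j : ℝ) / I) * (((I : ℝ) - (T j' : ℝ)) / ((I : ℝ) - 1)) := by
  have hjJ : j ≤ J := le_trans (le_of_lt hjj') hj'J
  have ha1 : 1 ≤ T j := hlb j hj1 hjJ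
  have hab : T j ≤ T j' := hmono j j' hj1 (le_of_lt hjj') hj'J
  have hb1 : 1 ≤ T j' := le_trans ha1 hab
  have hbI : T j' ≤ I - 1 := hub j' (by omega) hj'J
  have haI : T j ≤ I := by omega
  have hbI' : T j' ≤ I := by omega
  set a := T j with hadef
  set b := T j' with hbdef
  -- swProb congruence
  have hcong : ∀ (p q : Equiv.Perm (Fin I) → Prop), (∀ σ, p σ ↔ q σ) →
      swProb I p = swProb I q := by
    intro p q h
    unfold swProb
    rw [Finset.filter_congr (fun x _ => h x)]
  have h2R : (2 : ℝ) ≤ (I : ℝ) := by exact_mod_cast hI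
  have hI0 : (I : ℝ) ≠ 0 := by linarith
  have hI1 : (I : ℝ) - 1 ≠ 0 := by linarith
  -- the four basic sets
  set A := (univ : Finset (Fin I)).filter (fun x : Fin I => (x : ℕ) < a) with hAdef
  set B := (univ : Finset (Fin I)).filter (fun x : Fin I => (x : ℕ) < b) with hBdef
  set Ac := (univ : Finset (Fin I)).filter (fun x : Fin I => ¬ (x : ℕ) < a) with hAcdef
  set Bc := (univ : Finset (Fin I)).filter (fun x : Fin I => ¬ (x : ℕ) < b) with hBcdef
  have hA : A.card = a := Iio_card_filter haI
  have hB : B.card = b := Iio_card_filter hbI'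
  have hAc : Ac.card = I - a := Iio_card_filter_not haI
  have hBc : Bc.card = I - b := Iio_card_filter_not hbI'
  have hABi : A ∩ B = A := by
    ext x
    simp only [hAdef, hBdef, Finset.mem_inter, mem_filter, mem_univ, true_and]
    omega
  have hAcBi : (Ac ∩ B).card = b - a := by
    have h1 : Ac ∩ B = B \ A := by
      ext x
      simp only [hAdef, hAcdef, hBdef, Finset.mem_inter, Finset.mem_sdiff,
        mem_filter, mem_univ, true_and]
      omega
    have h2 : A ⊆ B := by
      intro x hx
      simp only [hAdef, hBdef, mem_filter, mem_univ, true_and] at hx ⊢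
      omega
    rw [h1, Finset.card_sdiff_of_subset h2, hA, hB]
  have hABci : A ∩ Bc = ∅ := by
    ext x
    simp only [hAdef, hBcdef, Finset.mem_inter, mem_filter, mem_univ, true_and,
      Finset.notMem_empty, iff_false, not_and]
    omega
  have hAcBci : Ac ∩ Bc = Bc := by
    ext x
    simp only [hAcdef, hBcdef, Finset.mem_inter, mem_filter, mem_univ, true_and]
    omega
  refine ⟨?_, ?_, ?_, ?_⟩
  · rw [hcong _ (fun σ => ((σ i : ℕ) < a) ∧ ((σ i' : ℕ) < b))
      (by intro σ; simp [swZ, hadef, hbdef])]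
    rw [prob_eq hI i i' hii' (fun x : Fin I => (x : ℕ) < a) (fun x : Fin I => (x : ℕ) < b),
      S_card]
    rw [Finset.filter_congr_decidable univ (fun x : Fin I => (x : ℕ) < a) _]
    rw [Finset.filter_congr_decidable univ (fun x : Fin I => (x : ℕ) < b) _]
    rw [← hAdef, ← hBdef, hABi, hA, hB]
    have hle : a ≤ a * b := Nat.le_mul_of_pos_right a (by omega)
    rw [Nat.cast_sub hle]
    push_cast
    field_simp
  · rw [hcong _ (fun σ => (¬ (σ i : ℕ) < a) ∧ ((σ i' : ℕ) < b))
      (by intro σ; simp [swZ, hadef, hbdef])]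
    rw [prob_eq hI i i' hii' (fun x : Fin I => ¬ (x : ℕ) < a)
      (fun x : Fin I => (x : ℕ) < b),
      S_card]
    rw [Finset.filter_congr_decidable univ (fun x : Fin I => ¬ (x : ℕ) < a) _]
    rw [Finset.filter_congr_decidable univ (fun x : Fin I => (x : ℕ) < b) _]
    rw [← hAcdef, ← hBdef, hAcBi, hAc, hB]
    have hle : b - a ≤ (I - a) * b := le_trans (by omega) (Nat.le_mul_of_pos_right _ (by omega))
    rw [Nat.cast_sub hle, Nat.cast_sub hab, Nat.cast_mul, Nat.cast_sub haI]
    field_simp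
    ring
  · rw [hcong _ (fun σ => (¬ (σ i : ℕ) < a) ∧ (¬ (σ i' : ℕ) < b))
      (by intro σ; simp [swZ, hadef, hbdef])]
    rw [prob_eq hI i i' hii' (fun x : Fin I => ¬ (x : ℕ) < a)
      (fun x : Fin I => ¬ (x : ℕ) < b),
      S_card]
    rw [Finset.filter_congr_decidable univ (fun x : Fin I => ¬ (x : ℕ) < a) _]
    rw [Finset.filter_congr_decidable univ (fun x : Fin I => ¬ (x : ℕ) < b) _]
    rw [← hAcdef, ← hBcdef, hAcBci, hAc, hBc]
    have hle : I - b ≤ (I - a) * (I - b) := Nat.le_mul_of_pos_left _ (by omega)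
    rw [Nat.cast_sub hle, Nat.cast_mul, Nat.cast_sub haI, Nat.cast_sub hbI']
    field_simp
  · rw [hcong _ (fun σ => ((σ i : ℕ) < a) ∧ (¬ (σ i' : ℕ) < b))
      (by intro σ; simp [swZ, hadef, hbdef])]
    rw [prob_eq hI i i' hii' (fun x : Fin I => (x : ℕ) < a)
      (fun x : Fin I => ¬ (x : ℕ) < b),
      S_card]
    rw [Finset.filter_congr_decidable univ (fun x : Fin I => (x : ℕ) < a) _]
    rw [Finset.filter_congr_decidable univ (fun x : Fin I => ¬ (x : ℕ) < b) _]
    rw [← hAdef, ← hBcdef, hABci, hA, hBc]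
    rw [Finset.card_empty, Nat.sub_zero, Nat.cast_mul, Nat.cast_sub hbI']
    field_simp
end
end

section
/- Under the stepped-wedge randomization, the joint probability that several distinct clusters are all untreated factors as a sequential product beginning with the latest period: for any 1 ≤ m ≤ I, any pairwise distinct clusters i_1, …, i_m in {1,…,I}, and any periods a_1 ≤ a_2 ≤ … ≤ a_m in {1,…,J}, one has P(Z_{i_1 a_1} = 0, Z_{i_2 a_2} = 0, …, Z_{i_m a_m} = 0) = ∏_{t=0}^{m−1} (I − I_{a_{m−t}} − t)/(I − t). In particular, for m = 4 and pairwise distinct clusters i, i′, k, k′ with periods a ≤ b ≤ c ≤ d, P(Z_{ia}=0, Z_{i′b}=0, Z_{kc}=0, Z_{k′d}=0) = ((I − I_d)/I)·((I − I_c − 1)/(I − 1))·((I − I_b − 2)/(I − 2))·((I − I_a − 3)/(I − 3)). -/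
open Finset
open scoped Classical

noncomputable section

namespace SWAux

open Equiv

lemma card_preimage_succ {n : ℕ} (B : Finset (Fin (n + 1))) :
    (B.preimage Fin.succ (Fin.succ_injective n).injOn).card = (B.erase 0).card := by
  apply Finset.card_bij (fun a _ => Fin.succ a)
  · intro a ha
    rw [Finset.mem_preimage] at ha
    exact Finset.mem_erase.mpr ⟨Fin.succ_ne_zero a, ha⟩
  · intro a _ b _ h
    exact Fin.succ_injective n h
  · intro b hb
    rcases Finset.mem_erase.mp hb with ⟨hb0, hbB⟩
    exact ⟨b.pred hb0, Finset.mem_preimage.mpr (by rwa [Fin.succ_pred]), Fin.succ_pred _ _⟩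

lemma count_nested (m : ℕ) : ∀ (n : ℕ) (c : Fin m → Fin n), Function.Injective c →
    ∀ A : Fin m → Finset (Fin n), (∀ s t : Fin m, s ≤ t → A t ⊆ A s) →
    (Finset.univ.filter fun σ : Equiv.Perm (Fin n) => ∀ t, σ (c t) ∈ A t).card
      = (∏ u : Fin m, ((A u.rev).card - (u : ℕ))) * Nat.factorial (n - m) := by
  induction m with
  | zero =>
    intro n c _ A _
    have h : (Finset.univ.filter fun σ : Equiv.Perm (Fin n) => ∀ t : Fin 0, σ (c t) ∈ A t)
        = Finset.univ := by
      apply Finset.filter_true_of_mem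
      intro σ _ t
      exact t.elim0
    rw [h]
    simp [Finset.card_univ, Fintype.card_perm]
  | succ m ih =>
    intro n c hc A hA
    match n with
    | 0 => exact (c 0).elim0
    | (n + 1) =>
      have hsplit : (Finset.univ.filter fun σ : Equiv.Perm (Fin (n + 1)) => ∀ t, σ (c t) ∈ A t)
          = Finset.univ.filter fun σ : Equiv.Perm (Fin (n + 1)) =>
              (∀ t : Fin m, σ (c t.castSucc) ∈ A t.castSucc) ∧ σ (c (Fin.last m)) ∈ A (Fin.last m) := by
        apply Finset.filter_congr
        intro σ _
        exact Fin.forall_fin_succ'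
      rw [hsplit,
        Finset.card_eq_sum_card_fiberwise
          (f := fun σ : Equiv.Perm (Fin (n + 1)) => σ (c (Fin.last m)))
          (t := A (Fin.last m)) (fun σ hσ => (Finset.mem_filter.mp hσ).2.2)]
      have hdne : ∀ t : Fin m, Equiv.swap 0 (c (Fin.last m)) (c t.castSucc) ≠ 0 := by
        intro t h
        have h2 : c t.castSucc = c (Fin.last m) := by
          apply (Equiv.swap 0 (c (Fin.last m))).injective
          rw [h, Equiv.swap_apply_right]
        exact (Fin.castSucc_lt_last t).ne (hc h2)
      set δ : Fin m → Fin n := fun t => (Equiv.swap 0 (c (Fin.last m)) (c t.castSucc)).pred (hdne t)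
        with hδ
      have hδsucc : ∀ t, (δ t).succ = Equiv.swap 0 (c (Fin.last m)) (c t.castSucc) :=
        fun t => Fin.succ_pred _ _
      have hδinj : Function.Injective δ := by
        intro t1 t2 h
        have h2 : (δ t1).succ = (δ t2).succ := by rw [h]
        rw [hδsucc, hδsucc] at h2
        exact Fin.castSucc_injective m (hc ((Equiv.swap 0 (c (Fin.last m))).injective h2))
      have hfiber : ∀ p ∈ A (Fin.last m),
          ((Finset.univ.filter fun σ : Equiv.Perm (Fin (n + 1)) =>
              (∀ t : Fin m, σ (c t.castSucc) ∈ A t.castSucc) ∧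
                σ (c (Fin.last m)) ∈ A (Fin.last m)).filter
            fun σ => σ (c (Fin.last m)) = p).card
          = (∏ u : Fin m, ((A u.rev.castSucc).card - 1 - (u : ℕ))) * Nat.factorial (n - m) := by
        intro p hp
        set A' : Fin m → Finset (Fin n) :=
          fun t => ((A t.castSucc).image (Equiv.swap 0 p)).preimage Fin.succ
            (Fin.succ_injective n).injOn with hA'
        have hA'nested : ∀ s t : Fin m, s ≤ t → A' t ⊆ A' s := by
          intro s t hst x hx
          simp only [hA', Finset.mem_preimage] at hx ⊢
          exact Finset.image_subset_image (hA _ _ (Fin.castSucc_le_castSucc_iff.mpr hst)) hx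
        have hA'card : ∀ t : Fin m, (A' t).card = (A t.castSucc).card - 1 := by
          intro t
          have h0 : (0 : Fin (n + 1)) ∈ (A t.castSucc).image (Equiv.swap 0 p) :=
            Finset.mem_image.mpr ⟨p, hA _ _ (Fin.le_last _) hp, Equiv.swap_apply_right 0 p⟩
          simp only [hA']
          rw [card_preimage_succ, Finset.card_erase_of_mem h0,
            Finset.card_image_of_injective _ (Equiv.swap 0 p).injective]
        have key : ∀ (e : Equiv.Perm (Fin n)) (t : Fin m),
            (Equiv.swap 0 p * Equiv.Perm.decomposeFin.symm (0, e) * Equiv.swap 0 (c (Fin.last m)))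
                (c t.castSucc)
              = Equiv.swap 0 p ((e (δ t)).succ) := by
          intro e t
          have h1 : Equiv.swap 0 (c (Fin.last m)) (c t.castSucc) = (δ t).succ := (hδsucc t).symm
          simp only [Equiv.Perm.mul_apply, h1, Equiv.Perm.decomposeFin_symm_apply_succ,
            Equiv.swap_self, Equiv.refl_apply]
        have keyl : ∀ e : Equiv.Perm (Fin n),
            (Equiv.swap 0 p * Equiv.Perm.decomposeFin.symm (0, e) * Equiv.swap 0 (c (Fin.last m)))
                (c (Fin.last m)) = p := by
          intro e
          simp only [Equiv.Perm.mul_apply, Equiv.swap_apply_right,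
            Equiv.Perm.decomposeFin_symm_apply_zero, Equiv.swap_apply_left]
        have hΦΦ : ∀ σ : Equiv.Perm (Fin (n + 1)),
            Equiv.swap 0 p * (Equiv.swap 0 p * σ * Equiv.swap 0 (c (Fin.last m))) *
                Equiv.swap 0 (c (Fin.last m)) = σ := by
          intro σ
          simp only [← mul_assoc, Equiv.swap_mul_self, one_mul]
          rw [mul_assoc, Equiv.swap_mul_self, mul_one]
        have hbij :
            ((Finset.univ.filter fun σ : Equiv.Perm (Fin (n + 1)) =>
                (∀ t : Fin m, σ (c t.castSucc) ∈ A t.castSucc) ∧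
                  σ (c (Fin.last m)) ∈ A (Fin.last m)).filter
              fun σ => σ (c (Fin.last m)) = p).card
            = (Finset.univ.filter fun e : Equiv.Perm (Fin n) => ∀ t, e (δ t) ∈ A' t).card := by
          symm
          apply Finset.card_bij (fun e _ =>
            Equiv.swap 0 p * Equiv.Perm.decomposeFin.symm (0, e) * Equiv.swap 0 (c (Fin.last m)))
          · intro e he
            simp only [Finset.mem_filter, Finset.mem_univ, true_and] at he ⊢
            refine ⟨⟨fun t => ?_, ?_⟩, keyl e⟩
            · rw [key]
              have h2 := he t
              simp only [hA', Finset.mem_preimage] at h2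
              rcases Finset.mem_image.mp h2 with ⟨y, hy, hy2⟩
              rw [← hy2, Equiv.swap_apply_self]
              exact hy
            · rw [keyl]
              exact hp
          · intro e1 _ e2 _ h
            have h3 : Equiv.Perm.decomposeFin.symm (0, e1)
                = Equiv.Perm.decomposeFin.symm (0, e2) :=
              mul_left_cancel (mul_right_cancel h)
            have h4 : ((0 : Fin (n+1)), e1) = ((0 : Fin (n+1)), e2) :=
              Equiv.Perm.decomposeFin.symm.injective h3
            exact (Prod.ext_iff.mp h4).2
          · intro σ hσ
            simp only [Finset.mem_filter, Finset.mem_univ, true_and] at hσ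
            obtain ⟨⟨hcon, _⟩, hlast⟩ := hσ
            set ρ : Equiv.Perm (Fin (n + 1)) :=
              Equiv.swap 0 p * σ * Equiv.swap 0 (c (Fin.last m)) with hρ
            have hρ0 : ρ 0 = 0 := by
              rw [hρ]
              simp only [Equiv.Perm.mul_apply, Equiv.swap_apply_left, hlast,
                Equiv.swap_apply_right]
            set e : Equiv.Perm (Fin n) := (Equiv.Perm.decomposeFin ρ).2 with he
            have h1 : Equiv.Perm.decomposeFin.symm (Equiv.Perm.decomposeFin ρ) = ρ :=
              Equiv.symm_apply_apply _ _
            have h2 : (Equiv.Perm.decomposeFin ρ).1 = ρ 0 := by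
              calc (Equiv.Perm.decomposeFin ρ).1
                  = Equiv.Perm.decomposeFin.symm
                      ((Equiv.Perm.decomposeFin ρ).1, (Equiv.Perm.decomposeFin ρ).2) 0 :=
                    (Equiv.Perm.decomposeFin_symm_apply_zero _ _).symm
                _ = ρ 0 := by rw [Prod.mk.eta, h1]
            have hρd : Equiv.Perm.decomposeFin.symm ((0 : Fin (n+1)), e) = ρ := by
              have h5 : ((0 : Fin (n+1)), e) = Equiv.Perm.decomposeFin ρ := by
                rw [he, ← (h2.trans hρ0)]
              rw [h5]
              exact h1
            have hσe : Equiv.swap 0 p * Equiv.Perm.decomposeFin.symm ((0 : Fin (n+1)), e) *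
                Equiv.swap 0 (c (Fin.last m)) = σ := by
              rw [hρd, hρ]
              exact hΦΦ σ
            refine ⟨e, ?_, hσe⟩
            simp only [Finset.mem_filter, Finset.mem_univ, true_and]
            intro t
            have h5 : σ (c t.castSucc) = Equiv.swap 0 p ((e (δ t)).succ) := by
              rw [← key e t, hσe]
            have h6 := hcon t
            rw [h5] at h6
            simp only [hA', Finset.mem_preimage]
            exact Finset.mem_image.mpr ⟨_, h6, Equiv.swap_apply_self _ _ _⟩
        rw [hbij, ih n δ hδinj A' hA'nested]
        congr 1
        apply Finset.prod_congr rfl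
        intro u _
        rw [hA'card]
      rw [Finset.sum_congr rfl hfiber, Finset.sum_const, smul_eq_mul]
      have hsub : n + 1 - (m + 1) = n - m := by omega
      rw [hsub, Fin.prod_univ_succ]
      have h0 : ((0 : Fin (m + 1)).rev) = Fin.last m := Fin.rev_zero m
      have hprod : ∀ u : Fin m,
          (A (u.succ : Fin (m + 1)).rev).card - ((u.succ : Fin (m + 1)) : ℕ)
            = (A u.rev.castSucc).card - 1 - (u : ℕ) := by
        intro u
        rw [Fin.rev_succ, Fin.val_succ]
        omega
      rw [h0]
      simp only [Fin.val_zero, Nat.sub_zero]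
      rw [Finset.prod_congr rfl (fun u _ => hprod u), ← mul_assoc]

lemma card_filter_lt (n k : ℕ) (hk : k ≤ n) :
    (Finset.univ.filter fun v : Fin n => (v : ℕ) < k).card = k := by
  have h : (Finset.univ.filter fun v : Fin n => (v : ℕ) < k).card = (Finset.range k).card := by
    apply Finset.card_bij (fun (v : Fin n)
      (_ : v ∈ Finset.univ.filter fun v : Fin n => (v : ℕ) < k) => (v : ℕ))
    · intro a ha
      simp only [Finset.mem_filter] at ha
      exact Finset.mem_range.mpr ha.2
    · intro a _ b _ h
      exact Fin.ext h
    · intro b hb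
      have hb' := Finset.mem_range.mp hb
      exact ⟨⟨b, lt_of_lt_of_le hb' hk⟩, by simp [hb'], rfl⟩
  rw [h, Finset.card_range]

lemma card_filter_ge (n k : ℕ) (hk : k ≤ n) :
    (Finset.univ.filter fun v : Fin n => k ≤ (v : ℕ)).card = n - k := by
  have h1 : (Finset.univ.filter fun v : Fin n => k ≤ (v : ℕ))
      = Finset.univ.filter fun v : Fin n => ¬ (v : ℕ) < k := by
    apply Finset.filter_congr
    intro x _
    exact not_lt.symm
  have h2 := Finset.card_filter_add_card_filter_not
    (s := (Finset.univ : Finset (Fin n))) (p := fun v : Fin n => (v : ℕ) < k)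
  rw [card_filter_lt n k hk, Finset.card_univ, Fintype.card_fin] at h2
  rw [h1]
  omega

lemma cast_prod_sub (I m : ℕ) (g : Fin m → ℕ)
    (hganti : ∀ s t : Fin m, s ≤ t → g t ≤ g s)
    (hgI : ∀ t, g t + 1 ≤ I) :
    ((∏ t : Fin m, (I - g t - (t : ℕ)) : ℕ) : ℝ)
      = ∏ t : Fin m, ((I : ℝ) - (g t : ℝ) - ((t : ℕ) : ℝ)) := by
  by_cases hall : ∀ t : Fin m, g t + (t : ℕ) ≤ I
  · rw [Nat.cast_prod]
    apply Finset.prod_congr rfl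
    intro t _
    rw [Nat.sub_sub, Nat.cast_sub (hall t)]
    push_cast
    ring
  · push_neg at hall
    obtain ⟨t0, ht0⟩ := hall
    set gg : ℕ → ℕ := fun kk => if h : kk < m then g ⟨kk, h⟩ else 0 with hgg
    have hggval : ∀ (kk : ℕ) (h : kk < m), gg kk = g ⟨kk, h⟩ := by
      intro kk h
      simp [hgg, h]
    have hex : ∃ kk : ℕ, kk < m ∧ I ≤ gg kk + kk :=
      ⟨(t0 : ℕ), t0.isLt, by rw [hggval _ t0.isLt]; simpa using ht0.le⟩
    obtain ⟨hk0m, hk0⟩ := Nat.find_spec hex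
    rw [hggval _ hk0m] at hk0
    have heq : g ⟨Nat.find hex, hk0m⟩ + Nat.find hex = I := by
      by_contra hne
      have hgle := hgI (⟨Nat.find hex, hk0m⟩ : Fin m)
      have hk1m : I - g ⟨Nat.find hex, hk0m⟩ < m := by omega
      have hgk1 : g ⟨Nat.find hex, hk0m⟩ ≤ g ⟨I - g ⟨Nat.find hex, hk0m⟩, hk1m⟩ :=
        hganti _ _ (by simp only [Fin.mk_le_mk]; omega)
      have hmin := Nat.find_min hex
        (show I - g ⟨Nat.find hex, hk0m⟩ < Nat.find hex by omega)
      apply hmin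
      refine ⟨hk1m, ?_⟩
      rw [hggval _ hk1m]
      omega
    have hzero1 : (∏ t : Fin m, (I - g t - (t : ℕ))) = 0 := by
      apply Finset.prod_eq_zero (Finset.mem_univ (⟨Nat.find hex, hk0m⟩ : Fin m))
      have hv : ((⟨Nat.find hex, hk0m⟩ : Fin m) : ℕ) = Nat.find hex := rfl
      omega
    have hzero2 : (∏ t : Fin m, ((I : ℝ) - (g t : ℝ) - ((t : ℕ) : ℝ))) = 0 := by
      apply Finset.prod_eq_zero (Finset.mem_univ (⟨Nat.find hex, hk0m⟩ : Fin m))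
      have hv : ((⟨Nat.find hex, hk0m⟩ : Fin m) : ℕ) = Nat.find hex := rfl
      have hc : (I : ℝ) = (g ⟨Nat.find hex, hk0m⟩ : ℝ) + ((Nat.find hex : ℕ) : ℝ) := by
        exact_mod_cast heq.symm
      rw [hv, hc]
      ring
    rw [hzero1, hzero2, Nat.cast_zero]

lemma prod_sub_mul_factorial (I : ℕ) : ∀ m : ℕ, m ≤ I →
    (∏ u : Fin m, (I - (u : ℕ))) * Nat.factorial (I - m) = Nat.factorial I := by
  intro m
  induction m with
  | zero => intro _; simp
  | succ m ih =>
    intro hm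
    rw [Fin.prod_univ_castSucc]
    simp only [Fin.coe_castSucc, Fin.val_last]
    have h1 : I - (m + 1) = (I - m) - 1 := by omega
    have h2 : 0 < I - m := by omega
    rw [h1, mul_assoc, Nat.mul_factorial_pred h2.ne', ih (by omega)]

lemma swProb_congr (I : ℕ) (p q : Equiv.Perm (Fin I) → Prop) (h : ∀ σ, p σ ↔ q σ) :
    swProb I p = swProb I q := by
  have h2 : (Finset.filter p Finset.univ) = Finset.filter q Finset.univ :=
    Finset.filter_congr (fun σ _ => h σ)
  unfold swProb
  rw [h2]

end SWAux
lemma sw_part1 (I J : ℕ) (T : ℕ → ℕ)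
    (hmono : ∀ j j', 1 ≤ j → j ≤ j' → j' ≤ J → T j ≤ T j')
    (hlb : ∀ j, 1 ≤ j → j ≤ J → 1 ≤ T j)
    (hub : ∀ j, 1 ≤ j → j ≤ J → T j ≤ I - 1) (hI : 1 ≤ I)
    (m : ℕ) (hmI : m ≤ I) (idx : Fin m → Fin I) (hidx : Function.Injective idx)
    (a : Fin m → ℕ) (ha : Monotone a) (ha1 : ∀ t, 1 ≤ a t) (haJ : ∀ t, a t ≤ J) :
    swProb I (fun σ => ∀ t : Fin m, swZ I T σ (idx t) (a t) = 0)
      = ∏ t : Fin m,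
          ((I : ℝ) - (T (a t.rev) : ℝ) - ((t : ℕ) : ℝ)) / ((I : ℝ) - ((t : ℕ) : ℝ)) := by
  set A : Fin m → Finset (Fin I) :=
    fun t => Finset.univ.filter fun v : Fin I => T (a t) ≤ (v : ℕ) with hA
  have hTle : ∀ j, 1 ≤ j → j ≤ J → T j + 1 ≤ I := by
    intro j h1 h2
    have := hub j h1 h2
    omega
  have hAnested : ∀ s t : Fin m, s ≤ t → A t ⊆ A s := by
    intro s t hst x hx
    simp only [hA, Finset.mem_filter, Finset.mem_univ, true_and] at hx ⊢
    exact le_trans (hmono (a s) (a t) (ha1 s) (ha hst) (haJ t)) hx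
  have hAcard : ∀ t, (A t).card = I - T (a t) := by
    intro t
    have := hTle (a t) (ha1 t) (haJ t)
    exact SWAux.card_filter_ge I (T (a t)) (by omega)
  have hiff : ∀ σ : Equiv.Perm (Fin I),
      (∀ t : Fin m, swZ I T σ (idx t) (a t) = 0) ↔ (∀ t, σ (idx t) ∈ A t) := by
    intro σ
    apply forall_congr'
    intro t
    simp [swZ, hA, not_lt]
  rw [SWAux.swProb_congr I _ _ hiff]
  unfold swProb
  rw [Finset.filter_congr_decidable, SWAux.count_nested m I idx hidx A hAnested]
  rw [Finset.prod_congr rfl (fun u (_ : u ∈ Finset.univ) => by rw [hAcard u.rev])]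
  have hfact : (∏ u : Fin m, (I - (u : ℕ))) * Nat.factorial (I - m) = Nat.factorial I :=
    SWAux.prod_sub_mul_factorial I m hmI
  have hganti : ∀ s t : Fin m, s ≤ t → T (a t.rev) ≤ T (a s.rev) := by
    intro s t hst
    exact hmono _ _ (ha1 _) (ha (Fin.rev_le_rev.mpr hst)) (haJ _)
  have hnum := SWAux.cast_prod_sub I m (fun t => T (a t.rev)) hganti
    (fun t => hTle (a t.rev) (ha1 _) (haJ _))
  have hden : ((∏ u : Fin m, (I - (u : ℕ)) : ℕ) : ℝ)
      = ∏ u : Fin m, ((I : ℝ) - ((u : ℕ) : ℝ)) := by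
    rw [Nat.cast_prod]
    apply Finset.prod_congr rfl
    intro u _
    have : (u : ℕ) ≤ I := le_of_lt (lt_of_lt_of_le u.isLt hmI)
    rw [Nat.cast_sub this]
  have hdenne : ∀ u : Fin m, ((I : ℝ) - ((u : ℕ) : ℝ)) ≠ 0 := by
    intro u
    have h1 : (u : ℕ) < I := lt_of_lt_of_le u.isLt hmI
    have h2 : ((u : ℕ) : ℝ) < (I : ℝ) := by exact_mod_cast h1
    linarith
  have hnum' : ((∏ t : Fin m, (I - T (a t.rev) - (t : ℕ)) : ℕ) : ℝ)
      = ∏ t : Fin m, ((I : ℝ) - (T (a t.rev) : ℝ) - ((t : ℕ) : ℝ)) := hnum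
  have hIfact : (Nat.factorial I : ℝ)
      = (∏ u : Fin m, ((I : ℝ) - ((u : ℕ) : ℝ))) * (Nat.factorial (I - m) : ℝ) := by
    rw [← hden, ← Nat.cast_mul, hfact]
  rw [Finset.prod_div_distrib, Nat.cast_mul, hnum', hIfact]
  have hd2 : (∏ u : Fin m, ((I : ℝ) - ((u : ℕ) : ℝ))) ≠ 0 :=
    Finset.prod_ne_zero_iff.mpr (fun u _ => hdenne u)
  have hf2 : (Nat.factorial (I - m) : ℝ) ≠ 0 :=
    Nat.cast_ne_zero.mpr (Nat.factorial_ne_zero _)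
  field_simp
theorem statement4
    (I J : ℕ) (hI : 2 ≤ I) (hJ : 1 ≤ J)
    (T : ℕ → ℕ)
    (hmono : ∀ j j', 1 ≤ j → j ≤ j' → j' ≤ J → T j ≤ T j')
    (hlb : ∀ j, 1 ≤ j → j ≤ J → 1 ≤ T j)
    (hub : ∀ j, 1 ≤ j → j ≤ J → T j ≤ I - 1) :
    (∀ m : ℕ, 1 ≤ m → m ≤ I → ∀ idx : Fin m → Fin I, Function.Injective idx →
      ∀ a : Fin m → ℕ, Monotone a → (∀ t, 1 ≤ a t) → (∀ t, a t ≤ J) →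
      swProb I (fun σ => ∀ t : Fin m, swZ I T σ (idx t) (a t) = 0)
        = ∏ t : Fin m,
            ((I : ℝ) - (T (a t.rev) : ℝ) - ((t : ℕ) : ℝ)) / ((I : ℝ) - ((t : ℕ) : ℝ))) ∧
    (∀ i i' k k' : Fin I, i ≠ i' → i ≠ k → i ≠ k' → i' ≠ k → i' ≠ k' → k ≠ k' →
      ∀ a b c d : ℕ, 1 ≤ a → a ≤ b → b ≤ c → c ≤ d → d ≤ J →
      swProb I (fun σ => swZ I T σ i a = 0 ∧ swZ I T σ i' b = 0 ∧
          swZ I T σ k c = 0 ∧ swZ I T σ k' d = 0)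
        = (((I : ℝ) - (T d : ℝ)) / I) * (((I : ℝ) - (T c : ℝ) - 1) / ((I : ℝ) - 1)) *
            (((I : ℝ) - (T b : ℝ) - 2) / ((I : ℝ) - 2)) *
            (((I : ℝ) - (T a : ℝ) - 3) / ((I : ℝ) - 3))) := by
  constructor
  · intro m hm1 hmI idx hidx a ha ha1 haJ
    exact sw_part1 I J T hmono hlb hub (by omega) m hmI idx hidx a ha ha1 haJ
  · intro i i' k k' h1 h2 h3 h4 h5 h6 a b c d ha1 hab hbc hcd hdJ
    have hidx : Function.Injective ![i, i', k, k'] := by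
      intro s t hst
      fin_cases s <;> fin_cases t <;> simp_all
    have h4I : 4 ≤ I := by
      have := Fintype.card_le_of_injective _ hidx
      simpa using this
    have hamono : Monotone ![a, b, c, d] := by
      rw [Fin.monotone_iff_le_succ]
      intro u
      fin_cases u
      · exact hab
      · exact hbc
      · exact hcd
    have hle1 : ∀ t : Fin 4, 1 ≤ ![a, b, c, d] t := by
      intro t
      fin_cases t
      · show 1 ≤ a; omega
      · show 1 ≤ b; omega
      · show 1 ≤ c; omega
      · show 1 ≤ d; omega
    have hleJ : ∀ t : Fin 4, ![a, b, c, d] t ≤ J := by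
      intro t
      fin_cases t
      · show a ≤ J; omega
      · show b ≤ J; omega
      · show c ≤ J; omega
      · show d ≤ J; omega
    have hkey := sw_part1 I J T hmono hlb hub (by omega) 4 h4I ![i, i', k, k'] hidx
      ![a, b, c, d] hamono hle1 hleJ
    have hpe : swProb I (fun σ => swZ I T σ i a = 0 ∧ swZ I T σ i' b = 0 ∧
          swZ I T σ k c = 0 ∧ swZ I T σ k' d = 0)
        = swProb I (fun σ => ∀ t : Fin 4, swZ I T σ (![i, i', k, k'] t) (![a, b, c, d] t) = 0) := by
      apply SWAux.swProb_congr
      intro σ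
      constructor
      · rintro ⟨ha', hb', hc', hd'⟩ t
        fin_cases t <;> simpa
      · intro h
        exact ⟨by simpa using h 0, by simpa using h 1, by simpa using h 2, by simpa using h 3⟩
    rw [hpe, hkey, Fin.prod_univ_four]
    have r0 : ((0 : Fin 4).rev) = (3 : Fin 4) := by decide
    have r1 : ((1 : Fin 4).rev) = (2 : Fin 4) := by decide
    have r2 : ((2 : Fin 4).rev) = (1 : Fin 4) := by decide
    have r3 : ((3 : Fin 4).rev) = (0 : Fin 4) := by decide
    rw [r0, r1, r2, r3]
    simp only [show ((0 : Fin 4) : ℕ) = 0 from rfl, show ((1 : Fin 4) : ℕ) = 1 from rfl,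
      show ((2 : Fin 4) : ℕ) = 2 from rfl, show ((3 : Fin 4) : ℕ) = 3 from rfl,
      show ![a, b, c, d] 2 = c from rfl, show ![a, b, c, d] 3 = d from rfl]
    norm_num
end
end

section
/- Under the stepped-wedge randomization with I ≥ 3, for pairwise distinct clusters i, i′, k in {1,…,I} and periods a ≤ b ≤ c in {1,…,J}, the order-3 all-treated joint probabilities are: (i) P(Z_{ia}=1, Z_{i′b}=1, Z_{kc}=1) = (I_a/I)·((I_b − 1)/(I − 1))·((I_c − 2)/(I − 2)); (ii) P(Z_{ia}=1, Z_{ib}=1, Z_{kc}=1) = (I_a/I)·((I_c − 1)/(I − 1)); (iii) P(Z_{ia}=1, Z_{i′b}=1, Z_{ic}=1) = (I_a/I)·((I_b − 1)/(I − 1)); (iv) P(Z_{ia}=1, Z_{i′b}=1, Z_{i′c}=1) = (I_a/I)·((I_b − 1)/(I − 1)); (v) P(Z_{ia}=1, Z_{ib}=1, Z_{ic}=1) = I_a/I. -/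
open Finset
open scoped Classical

noncomputable section

lemma fiber_card (I m : ℕ) (f g : Fin m → Fin I)
    (hf : Function.Injective f) (hg : Function.Injective g) :
    ((univ : Finset (Equiv.Perm (Fin I))).filter (fun σ => ∀ t, σ (f t) = g t)).card
      = Nat.factorial (I - m) := by
  rw [← Fintype.card_subtype]
  let e₀ : (Set.range f) ≃ (Set.range g) :=
    (Equiv.ofInjective f hf).symm.trans (Equiv.ofInjective g hg)
  have he₀ : ∀ t : Fin m, (e₀ ⟨f t, Set.mem_range_self t⟩ : Fin I) = g t := by
    intro t
    simp [e₀, Equiv.ofInjective_symm_apply]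
  have key : {σ : Equiv.Perm (Fin I) // ∀ t, σ (f t) = g t}
      ≃ (((Set.range f)ᶜ : Set (Fin I)) ≃ ((Set.range g)ᶜ : Set (Fin I))) := by
    refine (Equiv.subtypeEquivRight ?_).trans (Equiv.Set.compl e₀)
    intro σ
    constructor
    · intro h x
      obtain ⟨t, ht⟩ := x.2
      have hx : x = ⟨f t, Set.mem_range_self t⟩ := Subtype.ext ht.symm
      rw [hx]
      simp only [h t]
      exact (he₀ t).symm
    · intro h t
      have := h ⟨f t, Set.mem_range_self t⟩
      rw [this, he₀ t]
  rw [Fintype.card_congr key]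
  have hcf : Fintype.card ((Set.range f)ᶜ : Set (Fin I)) = I - m := by
    rw [Fintype.card_compl_set]
    simp [Set.card_range_of_injective hf]
  have hcg : Fintype.card ((Set.range g)ᶜ : Set (Fin I)) = I - m := by
    rw [Fintype.card_compl_set]
    simp [Set.card_range_of_injective hg]
  obtain ⟨e⟩ := Fintype.card_eq.mp (hcf.trans hcg.symm)
  rw [Fintype.card_equiv e, hcf]

lemma card_lt (I u : ℕ) (huI : u ≤ I) :
    ((univ : Finset (Fin I)).filter (fun z : Fin I => (z : ℕ) < u)).card = u := by
  have himg : ((univ : Finset (Fin I)).filter (fun z : Fin I => (z : ℕ) < u)).image Fin.val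
      = Finset.range u := by
    ext n
    simp only [mem_image, mem_filter, mem_univ, true_and, mem_range]
    constructor
    · rintro ⟨z, hz, rfl⟩; exact hz
    · intro hn; exact ⟨⟨n, lt_of_lt_of_le hn huI⟩, hn, rfl⟩
  have := Finset.card_image_of_injective
    ((univ : Finset (Fin I)).filter (fun z : Fin I => (z : ℕ) < u)) Fin.val_injective
  rw [himg, Finset.card_range] at this
  exact this.symm

lemma card_lt_ne1 (I t : ℕ) (htI : t ≤ I) (x : Fin I) (hx : (x : ℕ) < t) :
    ((univ : Finset (Fin I)).filter (fun y : Fin I => (y : ℕ) < t ∧ y ≠ x)).card = t - 1 := by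
  have hset : (univ : Finset (Fin I)).filter (fun y : Fin I => (y : ℕ) < t ∧ y ≠ x)
      = ((univ : Finset (Fin I)).filter (fun z : Fin I => (z : ℕ) < t)) \ {x} := by
    ext z; simp [and_comm]
  rw [hset, card_sdiff_of_subset (by simp [hx]), card_lt I t htI, card_singleton]

lemma card_lt_ne2 (I u : ℕ) (huI : u ≤ I) (x y : Fin I) (hxy : x ≠ y)
    (hx : (x : ℕ) < u) (hy : (y : ℕ) < u) :
    ((univ : Finset (Fin I)).filter
      (fun z : Fin I => (z : ℕ) < u ∧ z ≠ x ∧ z ≠ y)).card = u - 2 := by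
  have hset : (univ : Finset (Fin I)).filter (fun z : Fin I => (z : ℕ) < u ∧ z ≠ x ∧ z ≠ y)
      = ((univ : Finset (Fin I)).filter (fun z : Fin I => (z : ℕ) < u)) \ {x, y} := by
    ext z; simp [and_assoc, and_comm, and_left_comm, not_or]
  rw [hset, card_sdiff_of_subset ?_, card_lt I u huI, card_insert_of_notMem (by simp [hxy]),
    card_singleton]
  intro z hz
  simp only [mem_insert, mem_singleton] at hz
  rcases hz with rfl | rfl <;> simp [hx, hy]

lemma sum_ind {α : Type*} [Fintype α] (P : α → Prop) [DecidablePred P] (c : ℕ) :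
    (∑ y : α, if P y then c else 0) = ((univ : Finset α).filter P).card * c := by
  rw [← Finset.sum_filter, Finset.sum_const, smul_eq_mul]

lemma card_tset3 (I s t u : ℕ) (hst : s ≤ t) (htu : t ≤ u) (huI : u ≤ I) :
    ((univ : Finset (Fin I × Fin I × Fin I)).filter
        (fun p => (p.1 : ℕ) < s ∧ (p.2.1 : ℕ) < t ∧ (p.2.2 : ℕ) < u ∧
          p.1 ≠ p.2.1 ∧ p.1 ≠ p.2.2 ∧ p.2.1 ≠ p.2.2)).card
      = s * (t - 1) * (u - 2) := by
  rw [Finset.card_filter]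
  rw [Fintype.sum_prod_type]
  have hz : ∀ x y : Fin I,
      (∑ z : Fin I, if (x : ℕ) < s ∧ (y : ℕ) < t ∧ (z : ℕ) < u ∧
          x ≠ y ∧ x ≠ z ∧ y ≠ z then 1 else 0)
        = if (x : ℕ) < s ∧ (y : ℕ) < t ∧ x ≠ y then u - 2 else 0 := by
    intro x y
    by_cases h : (x : ℕ) < s ∧ (y : ℕ) < t ∧ x ≠ y
    · rw [if_pos h]
      have : ∀ z : Fin I, ((x : ℕ) < s ∧ (y : ℕ) < t ∧ (z : ℕ) < u ∧
          x ≠ y ∧ x ≠ z ∧ y ≠ z) ↔ ((z : ℕ) < u ∧ z ≠ x ∧ z ≠ y) := by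
        intro z
        constructor
        · rintro ⟨_, _, h3, _, h5, h6⟩; exact ⟨h3, Ne.symm h5, Ne.symm h6⟩
        · rintro ⟨h3, h5, h6⟩; exact ⟨h.1, h.2.1, h3, h.2.2, Ne.symm h5, Ne.symm h6⟩
      simp only [this]
      rw [sum_ind, card_lt_ne2 I u huI x y h.2.2 (lt_of_lt_of_le h.1 (hst.trans htu))
        (lt_of_lt_of_le h.2.1 htu), mul_one]
    · rw [if_neg h, Finset.sum_eq_zero]
      intro z _
      rw [if_neg]
      tauto
  have hy : ∀ x : Fin I,
      (∑ y : Fin I, if (x : ℕ) < s ∧ (y : ℕ) < t ∧ x ≠ y then u - 2 else 0)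
        = if (x : ℕ) < s then (t - 1) * (u - 2) else 0 := by
    intro x
    by_cases h : (x : ℕ) < s
    · rw [if_pos h]
      have : ∀ y : Fin I, ((x : ℕ) < s ∧ (y : ℕ) < t ∧ x ≠ y) ↔
          ((y : ℕ) < t ∧ y ≠ x) := by
        intro y
        constructor
        · rintro ⟨_, h2, h3⟩; exact ⟨h2, Ne.symm h3⟩
        · rintro ⟨h2, h3⟩; exact ⟨h, h2, Ne.symm h3⟩
      simp only [this]
      rw [sum_ind, card_lt_ne1 I t (htu.trans huI) x (lt_of_lt_of_le h hst)]
    · rw [if_neg h, Finset.sum_eq_zero]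
      intro y _
      rw [if_neg]
      tauto
  calc (∑ x : Fin I, ∑ p : Fin I × Fin I,
        if (x : ℕ) < s ∧ (p.1 : ℕ) < t ∧ (p.2 : ℕ) < u ∧
          x ≠ p.1 ∧ x ≠ p.2 ∧ p.1 ≠ p.2 then 1 else 0)
      = ∑ x : Fin I, if (x : ℕ) < s then (t - 1) * (u - 2) else 0 := by
        refine Finset.sum_congr rfl fun x _ => ?_
        rw [Fintype.sum_prod_type]
        rw [Finset.sum_congr rfl fun y _ => hz x y, hy x]
    _ = s * ((t - 1) * (u - 2)) := by
        rw [sum_ind, card_lt I s ((hst.trans htu).trans huI)]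
    _ = s * (t - 1) * (u - 2) := by ring

lemma card_tset2 (I s t : ℕ) (hst : s ≤ t) (htI : t ≤ I) :
    ((univ : Finset (Fin I × Fin I)).filter
        (fun p => (p.1 : ℕ) < s ∧ (p.2 : ℕ) < t ∧ p.1 ≠ p.2)).card
      = s * (t - 1) := by
  rw [Finset.card_filter, Fintype.sum_prod_type]
  have hy : ∀ x : Fin I,
      (∑ y : Fin I, if (x : ℕ) < s ∧ (y : ℕ) < t ∧ x ≠ y then 1 else 0)
        = if (x : ℕ) < s then t - 1 else 0 := by
    intro x
    by_cases h : (x : ℕ) < s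
    · rw [if_pos h]
      have : ∀ y : Fin I, ((x : ℕ) < s ∧ (y : ℕ) < t ∧ x ≠ y) ↔
          ((y : ℕ) < t ∧ y ≠ x) := by
        intro y
        constructor
        · rintro ⟨_, h2, h3⟩; exact ⟨h2, Ne.symm h3⟩
        · rintro ⟨h2, h3⟩; exact ⟨h, h2, Ne.symm h3⟩
      simp only [this]
      rw [sum_ind, card_lt_ne1 I t htI x (lt_of_lt_of_le h hst), mul_one]
    · rw [if_neg h, Finset.sum_eq_zero]
      intro y _
      rw [if_neg]
      tauto
  rw [Finset.sum_congr rfl fun x _ => hy x, sum_ind, card_lt I s (hst.trans htI)]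

lemma vec3_inj {I : ℕ} (i i' k : Fin I) (hii' : i ≠ i') (hik : i ≠ k) (hi'k : i' ≠ k) :
    Function.Injective ![i, i', k] := by
  intro a b hab
  fin_cases a <;> fin_cases b <;> simp_all

lemma vec2_inj {I : ℕ} (i k : Fin I) (hik : i ≠ k) :
    Function.Injective ![i, k] := by
  intro a b hab
  fin_cases a <;> fin_cases b <;> simp_all

lemma vec1_inj {I : ℕ} (i : Fin I) : Function.Injective ![i] := by
  intro a b _
  fin_cases a <;> fin_cases b <;> rfl

lemma count3 (I : ℕ) (i i' k : Fin I) (hii' : i ≠ i') (hik : i ≠ k) (hi'k : i' ≠ k)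
    (s t u : ℕ) (hst : s ≤ t) (htu : t ≤ u) (huI : u ≤ I) :
    ((univ : Finset (Equiv.Perm (Fin I))).filter
        (fun σ => (σ i : ℕ) < s ∧ (σ i' : ℕ) < t ∧ (σ k : ℕ) < u)).card
      = s * (t - 1) * (u - 2) * Nat.factorial (I - 3) := by
  classical
  set Tset : Finset (Fin I × Fin I × Fin I) := (univ.filter
      (fun p : Fin I × Fin I × Fin I => (p.1 : ℕ) < s ∧ (p.2.1 : ℕ) < t ∧ (p.2.2 : ℕ) < u ∧
        p.1 ≠ p.2.1 ∧ p.1 ≠ p.2.2 ∧ p.2.1 ≠ p.2.2)) with hT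
  have hmap : ∀ σ ∈ (univ : Finset (Equiv.Perm (Fin I))).filter
      (fun σ => (σ i : ℕ) < s ∧ (σ i' : ℕ) < t ∧ (σ k : ℕ) < u),
      (σ i, σ i', σ k) ∈ Tset := by
    intro σ hσ
    simp only [hT, mem_filter, mem_univ, true_and] at hσ ⊢
    exact ⟨hσ.1, hσ.2.1, hσ.2.2, fun h => hii' (σ.injective h),
      fun h => hik (σ.injective h), fun h => hi'k (σ.injective h)⟩
  rw [Finset.card_eq_sum_card_fiberwise hmap]
  have hfib : ∀ p ∈ Tset,
      (((univ : Finset (Equiv.Perm (Fin I))).filter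
        (fun σ => (σ i : ℕ) < s ∧ (σ i' : ℕ) < t ∧ (σ k : ℕ) < u)).filter
          (fun σ => (σ i, σ i', σ k) = p)).card = Nat.factorial (I - 3) := by
    intro p hp
    simp only [hT, mem_filter, mem_univ, true_and] at hp
    rw [Finset.filter_filter]
    have hpred : ∀ σ : Equiv.Perm (Fin I),
        (((σ i : ℕ) < s ∧ (σ i' : ℕ) < t ∧ (σ k : ℕ) < u) ∧ (σ i, σ i', σ k) = p)
          ↔ (∀ t : Fin 3, σ (![i, i', k] t) = ![p.1, p.2.1, p.2.2] t) := by
      intro σ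
      constructor
      · rintro ⟨_, hp2⟩ t
        rw [Prod.ext_iff, Prod.ext_iff] at hp2
        obtain ⟨h1, h2, h3⟩ := hp2
        fin_cases t <;> simpa
      · intro h
        have h1 := h 0; have h2 := h 1; have h3 := h 2
        simp only [Matrix.cons_val_zero, Matrix.cons_val_one, Matrix.head_cons,
          Matrix.cons_val_two, Matrix.tail_cons] at h1 h2 h3
        refine ⟨⟨?_, ?_, ?_⟩, ?_⟩
        · rw [h1]; exact hp.1
        · rw [h2]; exact hp.2.1
        · rw [h3]; exact hp.2.2.1
        · rw [Prod.ext_iff, Prod.ext_iff]; exact ⟨h1, h2, h3⟩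
    rw [Finset.filter_congr (fun σ _ => (hpred σ))]
    exact fiber_card I 3 _ _ (vec3_inj i i' k hii' hik hi'k)
      (vec3_inj _ _ _ hp.2.2.2.1 hp.2.2.2.2.1 hp.2.2.2.2.2)
  rw [Finset.sum_congr rfl hfib, Finset.sum_const, smul_eq_mul]
  congr 1
  rw [hT]
  exact card_tset3 I s t u hst htu huI

lemma count2 (I : ℕ) (i k : Fin I) (hik : i ≠ k)
    (s t : ℕ) (hst : s ≤ t) (htI : t ≤ I) :
    ((univ : Finset (Equiv.Perm (Fin I))).filter
        (fun σ => (σ i : ℕ) < s ∧ (σ k : ℕ) < t)).card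
      = s * (t - 1) * Nat.factorial (I - 2) := by
  classical
  set Tset : Finset (Fin I × Fin I) := (univ.filter
      (fun p : Fin I × Fin I => (p.1 : ℕ) < s ∧ (p.2 : ℕ) < t ∧ p.1 ≠ p.2)) with hT
  have hmap : ∀ σ ∈ (univ : Finset (Equiv.Perm (Fin I))).filter
      (fun σ => (σ i : ℕ) < s ∧ (σ k : ℕ) < t),
      (σ i, σ k) ∈ Tset := by
    intro σ hσ
    simp only [hT, mem_filter, mem_univ, true_and] at hσ ⊢
    exact ⟨hσ.1, hσ.2, fun h => hik (σ.injective h)⟩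
  rw [Finset.card_eq_sum_card_fiberwise hmap]
  have hfib : ∀ p ∈ Tset,
      (((univ : Finset (Equiv.Perm (Fin I))).filter
        (fun σ => (σ i : ℕ) < s ∧ (σ k : ℕ) < t)).filter
          (fun σ => (σ i, σ k) = p)).card = Nat.factorial (I - 2) := by
    intro p hp
    simp only [hT, mem_filter, mem_univ, true_and] at hp
    rw [Finset.filter_filter]
    have hpred : ∀ σ : Equiv.Perm (Fin I),
        (((σ i : ℕ) < s ∧ (σ k : ℕ) < t) ∧ (σ i, σ k) = p)
          ↔ (∀ t : Fin 2, σ (![i, k] t) = ![p.1, p.2] t) := by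
      intro σ
      constructor
      · rintro ⟨_, hp2⟩ t
        rw [Prod.ext_iff] at hp2
        obtain ⟨h1, h2⟩ := hp2
        fin_cases t <;> simpa
      · intro h
        have h1 := h 0; have h2 := h 1
        simp only [Matrix.cons_val_zero, Matrix.cons_val_one, Matrix.head_cons] at h1 h2
        refine ⟨⟨?_, ?_⟩, ?_⟩
        · rw [h1]; exact hp.1
        · rw [h2]; exact hp.2.1
        · rw [Prod.ext_iff]; exact ⟨h1, h2⟩
    rw [Finset.filter_congr (fun σ _ => (hpred σ))]
    exact fiber_card I 2 _ _ (vec2_inj i k hik) (vec2_inj _ _ hp.2.2)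
  rw [Finset.sum_congr rfl hfib, Finset.sum_const, smul_eq_mul]
  congr 1
  rw [hT]
  exact card_tset2 I s t hst htI

lemma count1 (I : ℕ) (i : Fin I) (s : ℕ) (hsI : s ≤ I) :
    ((univ : Finset (Equiv.Perm (Fin I))).filter
        (fun σ => (σ i : ℕ) < s)).card = s * Nat.factorial (I - 1) := by
  classical
  set Tset : Finset (Fin I) := (univ.filter (fun x : Fin I => (x : ℕ) < s)) with hT
  have hmap : ∀ σ ∈ (univ : Finset (Equiv.Perm (Fin I))).filter
      (fun σ => (σ i : ℕ) < s), σ i ∈ Tset := by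
    intro σ hσ
    simp only [hT, mem_filter, mem_univ, true_and] at hσ ⊢
    exact hσ
  rw [Finset.card_eq_sum_card_fiberwise hmap]
  have hfib : ∀ p ∈ Tset,
      (((univ : Finset (Equiv.Perm (Fin I))).filter
        (fun σ => (σ i : ℕ) < s)).filter (fun σ => σ i = p)).card
        = Nat.factorial (I - 1) := by
    intro p hp
    simp only [hT, mem_filter, mem_univ, true_and] at hp
    rw [Finset.filter_filter]
    have hpred : ∀ σ : Equiv.Perm (Fin I),
        (((σ i : ℕ) < s) ∧ σ i = p) ↔ (∀ t : Fin 1, σ (![i] t) = ![p] t) := by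
      intro σ
      constructor
      · rintro ⟨_, hp2⟩ t
        fin_cases t <;> simpa
      · intro h
        have h1 := h 0
        simp only [Matrix.cons_val_zero] at h1
        exact ⟨by rw [h1]; exact hp, h1⟩
    rw [Finset.filter_congr (fun σ _ => (hpred σ))]
    exact fiber_card I 1 _ _ (vec1_inj i) (vec1_inj p)
  rw [Finset.sum_congr rfl hfib, Finset.sum_const, smul_eq_mul]
  congr 1
  rw [hT]
  exact card_lt I s hsI

lemma swZ_eq_one (I : ℕ) (T : ℕ → ℕ) (σ : Equiv.Perm (Fin I)) (i : Fin I) (j : ℕ) :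
    swZ I T σ i j = 1 ↔ (σ i : ℕ) < T j := by
  simp [swZ]

lemma fact_split3 (I : ℕ) (hI3 : 3 ≤ I) :
    Nat.factorial I = I * (I - 1) * (I - 2) * Nat.factorial (I - 3) := by
  have h1 : I * Nat.factorial (I - 1) = Nat.factorial I :=
    Nat.mul_factorial_pred (by omega)
  have h2 : (I - 1) * Nat.factorial (I - 1 - 1) = Nat.factorial (I - 1) :=
    Nat.mul_factorial_pred (by omega)
  have h3 : (I - 2) * Nat.factorial (I - 2 - 1) = Nat.factorial (I - 2) :=
    Nat.mul_factorial_pred (by omega)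
  have e1 : I - 1 - 1 = I - 2 := by omega
  have e2 : I - 2 - 1 = I - 3 := by omega
  rw [← h1, ← h2, e1, ← h3, e2]
  ring

lemma fact_split2 (I : ℕ) (hI2 : 2 ≤ I) :
    Nat.factorial I = I * (I - 1) * Nat.factorial (I - 2) := by
  have h1 : I * Nat.factorial (I - 1) = Nat.factorial I :=
    Nat.mul_factorial_pred (by omega)
  have h2 : (I - 1) * Nat.factorial (I - 1 - 1) = Nat.factorial (I - 1) :=
    Nat.mul_factorial_pred (by omega)
  have e1 : I - 1 - 1 = I - 2 := by omega
  rw [← h1, ← h2, e1]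
  ring

lemma fact_split1 (I : ℕ) (hI1 : 1 ≤ I) :
    Nat.factorial I = I * Nat.factorial (I - 1) :=
  (Nat.mul_factorial_pred (by omega)).symm

theorem statement5
    (I J : ℕ) (hI : 2 ≤ I) (hJ : 1 ≤ J)
    (T : ℕ → ℕ)
    (hmono : ∀ j j', 1 ≤ j → j ≤ j' → j' ≤ J → T j ≤ T j')
    (hlb : ∀ j, 1 ≤ j → j ≤ J → 1 ≤ T j)
    (hub : ∀ j, 1 ≤ j → j ≤ J → T j ≤ I - 1)
    (hI3 : 3 ≤ I)
    (i i' k : Fin I) (hii' : i ≠ i') (hik : i ≠ k) (hi'k : i' ≠ k)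
    (a b c : ℕ) (ha1 : 1 ≤ a) (hab : a ≤ b) (hbc : b ≤ c) (hcJ : c ≤ J) :
    swProb I (fun σ => swZ I T σ i a = 1 ∧ swZ I T σ i' b = 1 ∧ swZ I T σ k c = 1)
      = ((T a : ℝ) / I) * (((T b : ℝ) - 1) / ((I : ℝ) - 1)) *
          (((T c : ℝ) - 2) / ((I : ℝ) - 2)) ∧
    swProb I (fun σ => swZ I T σ i a = 1 ∧ swZ I T σ i b = 1 ∧ swZ I T σ k c = 1)
      = ((T a : ℝ) / I) * (((T c : ℝ) - 1) / ((I : ℝ) - 1)) ∧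
    swProb I (fun σ => swZ I T σ i a = 1 ∧ swZ I T σ i' b = 1 ∧ swZ I T σ i c = 1)
      = ((T a : ℝ) / I) * (((T b : ℝ) - 1) / ((I : ℝ) - 1)) ∧
    swProb I (fun σ => swZ I T σ i a = 1 ∧ swZ I T σ i' b = 1 ∧ swZ I T σ i' c = 1)
      = ((T a : ℝ) / I) * (((T b : ℝ) - 1) / ((I : ℝ) - 1)) ∧
    swProb I (fun σ => swZ I T σ i a = 1 ∧ swZ I T σ i b = 1 ∧ swZ I T σ i c = 1)
      = (T a : ℝ) / I := by
  have hbJ : b ≤ J := hbc.trans hcJ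
  have hb1 : 1 ≤ b := ha1.trans hab
  have hc1 : 1 ≤ c := hb1.trans hbc
  have hTab : T a ≤ T b := hmono a b ha1 hab hbJ
  have hTbc : T b ≤ T c := hmono b c hb1 hbc hcJ
  have hTac : T a ≤ T c := hTab.trans hTbc
  have hTa1 : 1 ≤ T a := hlb a ha1 (hab.trans hbJ)
  have hTb1 : 1 ≤ T b := hTa1.trans hTab
  have hTc1 : 1 ≤ T c := hTb1.trans hTbc
  have hTcI : T c ≤ I := le_trans (hub c hc1 hcJ) (by omega)
  have hTbI : T b ≤ I := hTbc.trans hTcI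
  have hTaI : T a ≤ I := hTab.trans hTbI
  have hIr : (3 : ℝ) ≤ (I : ℝ) := by exact_mod_cast hI3
  have hI0 : (I : ℝ) ≠ 0 := by linarith
  have hI1 : (I : ℝ) - 1 ≠ 0 := by intro h; linarith [h]
  have hI2 : (I : ℝ) - 2 ≠ 0 := by intro h; linarith [h]
  have hF1 : ((Nat.factorial (I - 1) : ℕ) : ℝ) ≠ 0 :=
    Nat.cast_ne_zero.2 (Nat.factorial_ne_zero _)
  have hF2 : ((Nat.factorial (I - 2) : ℕ) : ℝ) ≠ 0 :=
    Nat.cast_ne_zero.2 (Nat.factorial_ne_zero _)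
  have hF3 : ((Nat.factorial (I - 3) : ℕ) : ℝ) ≠ 0 :=
    Nat.cast_ne_zero.2 (Nat.factorial_ne_zero _)
  have hcI1 : ((I - 1 : ℕ) : ℝ) = (I : ℝ) - 1 := by
    rw [Nat.cast_sub (by omega)]; norm_num
  have hcI2 : ((I - 2 : ℕ) : ℝ) = (I : ℝ) - 2 := by
    rw [Nat.cast_sub (by omega)]; norm_num
  refine ⟨?_, ?_, ?_, ?_, ?_⟩
  · -- (i) triple distinct
    have key : ((univ : Finset (Equiv.Perm (Fin I))).filter
        (fun σ => swZ I T σ i a = 1 ∧ swZ I T σ i' b = 1 ∧ swZ I T σ k c = 1)).card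
        = T a * (T b - 1) * (T c - 2) * Nat.factorial (I - 3) := by
      rw [Finset.filter_congr (fun σ _ => by
        simp only [swZ_eq_one] : ∀ σ ∈ (univ : Finset (Equiv.Perm (Fin I))),
          (swZ I T σ i a = 1 ∧ swZ I T σ i' b = 1 ∧ swZ I T σ k c = 1)
            ↔ ((σ i : ℕ) < T a ∧ (σ i' : ℕ) < T b ∧ (σ k : ℕ) < T c))]
      exact count3 I i i' k hii' hik hi'k (T a) (T b) (T c) hTab hTbc hTcI
    simp only [swProb]
    rw [Finset.filter_congr_decidable, key]
    by_cases hTc2 : 2 ≤ T c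
    · rw [fact_split3 I hI3]
      push_cast [Nat.cast_sub hTb1, Nat.cast_sub hTc2, hcI1, hcI2]
      field_simp
    · have hTc : T c = 1 := by omega
      have hTb : T b = 1 := by omega
      rw [hTb, hTc]
      norm_num
  · -- (ii) i,i,k
    have key : ((univ : Finset (Equiv.Perm (Fin I))).filter
        (fun σ => swZ I T σ i a = 1 ∧ swZ I T σ i b = 1 ∧ swZ I T σ k c = 1)).card
        = T a * (T c - 1) * Nat.factorial (I - 2) := by
      rw [Finset.filter_congr (fun σ _ => by
        simp only [swZ_eq_one]
        constructor
        · rintro ⟨h1, _, h3⟩; exact ⟨h1, h3⟩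
        · rintro ⟨h1, h3⟩; exact ⟨h1, lt_of_lt_of_le h1 hTab, h3⟩ :
          ∀ σ ∈ (univ : Finset (Equiv.Perm (Fin I))),
          (swZ I T σ i a = 1 ∧ swZ I T σ i b = 1 ∧ swZ I T σ k c = 1)
            ↔ ((σ i : ℕ) < T a ∧ (σ k : ℕ) < T c))]
      exact count2 I i k hik (T a) (T c) hTac hTcI
    simp only [swProb]
    rw [Finset.filter_congr_decidable, key, fact_split2 I (by omega)]
    push_cast [Nat.cast_sub hTc1, hcI1]
    field_simp
  · -- (iii) i,i',i
    have key : ((univ : Finset (Equiv.Perm (Fin I))).filter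
        (fun σ => swZ I T σ i a = 1 ∧ swZ I T σ i' b = 1 ∧ swZ I T σ i c = 1)).card
        = T a * (T b - 1) * Nat.factorial (I - 2) := by
      rw [Finset.filter_congr (fun σ _ => by
        simp only [swZ_eq_one]
        constructor
        · rintro ⟨h1, h2, _⟩; exact ⟨h1, h2⟩
        · rintro ⟨h1, h2⟩; exact ⟨h1, h2, lt_of_lt_of_le h1 hTac⟩ :
          ∀ σ ∈ (univ : Finset (Equiv.Perm (Fin I))),
          (swZ I T σ i a = 1 ∧ swZ I T σ i' b = 1 ∧ swZ I T σ i c = 1)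
            ↔ ((σ i : ℕ) < T a ∧ (σ i' : ℕ) < T b))]
      exact count2 I i i' hii' (T a) (T b) hTab hTbI
    simp only [swProb]
    rw [Finset.filter_congr_decidable, key, fact_split2 I (by omega)]
    push_cast [Nat.cast_sub hTb1, hcI1]
    field_simp
  · -- (iv) i,i',i'
    have key : ((univ : Finset (Equiv.Perm (Fin I))).filter
        (fun σ => swZ I T σ i a = 1 ∧ swZ I T σ i' b = 1 ∧ swZ I T σ i' c = 1)).card
        = T a * (T b - 1) * Nat.factorial (I - 2) := by
      rw [Finset.filter_congr (fun σ _ => by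
        simp only [swZ_eq_one]
        constructor
        · rintro ⟨h1, h2, _⟩; exact ⟨h1, h2⟩
        · rintro ⟨h1, h2⟩; exact ⟨h1, h2, lt_of_lt_of_le h2 hTbc⟩ :
          ∀ σ ∈ (univ : Finset (Equiv.Perm (Fin I))),
          (swZ I T σ i a = 1 ∧ swZ I T σ i' b = 1 ∧ swZ I T σ i' c = 1)
            ↔ ((σ i : ℕ) < T a ∧ (σ i' : ℕ) < T b))]
      exact count2 I i i' hii' (T a) (T b) hTab hTbI
    simp only [swProb]
    rw [Finset.filter_congr_decidable, key, fact_split2 I (by omega)]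
    push_cast [Nat.cast_sub hTb1, hcI1]
    field_simp
  · -- (v) i,i,i
    have key : ((univ : Finset (Equiv.Perm (Fin I))).filter
        (fun σ => swZ I T σ i a = 1 ∧ swZ I T σ i b = 1 ∧ swZ I T σ i c = 1)).card
        = T a * Nat.factorial (I - 1) := by
      rw [Finset.filter_congr (fun σ _ => by
        simp only [swZ_eq_one]
        constructor
        · rintro ⟨h1, _, _⟩; exact h1
        · intro h1; exact ⟨h1, lt_of_lt_of_le h1 hTab, lt_of_lt_of_le h1 hTac⟩ :
          ∀ σ ∈ (univ : Finset (Equiv.Perm (Fin I))),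
          (swZ I T σ i a = 1 ∧ swZ I T σ i b = 1 ∧ swZ I T σ i c = 1)
            ↔ ((σ i : ℕ) < T a))]
      exact count1 I i (T a) hTaI
    simp only [swProb]
    rw [Finset.filter_congr_decidable, key, fact_split1 I (by omega)]
    push_cast
    field_simp
end
end

section
/- Under the stepped-wedge randomization with I ≥ 3, for pairwise distinct clusters i, i′, k in {1,…,I} and periods a ≤ b ≤ c in {1,…,J}, the order-3 all-control joint probabilities are: (i) P(Z_{ia}=0, Z_{i′b}=0, Z_{kc}=0) = ((I − I_c)/I)·((I − I_b − 1)/(I − 1))·((I − I_a − 2)/(I − 2)); (ii) P(Z_{ia}=0, Z_{ib}=0, Z_{kc}=0) = ((I − I_c)/I)·((I − I_b − 1)/(I − 1)); (iii) P(Z_{ia}=0, Z_{i′b}=0, Z_{ic}=0) = ((I − I_c)/I)·((I − I_b − 1)/(I − 1)); (iv) P(Z_{ia}=0, Z_{i′b}=0, Z_{i′c}=0) = ((I − I_c)/I)·((I − I_a − 1)/(I − 1)); (v) P(Z_{ia}=0, Z_{ib}=0, Z_{ic}=0) = (I − I_c)/I. -/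
open Finset
open scoped Classical

noncomputable section

private lemma sw_fiber_swap {n : ℕ} (a : Fin n) (s : Finset (Fin n)) (f : Fin n → Fin n)
    (v w : Fin n) (hv : ∀ x ∈ s, f x ≠ v) (hw : ∀ x ∈ s, f x ≠ w) :
    (Finset.univ.filter (fun σ : Equiv.Perm (Fin n) => σ a = v ∧ ∀ x ∈ s, σ x = f x)).card
      = (Finset.univ.filter (fun σ : Equiv.Perm (Fin n) => σ a = w ∧ ∀ x ∈ s, σ x = f x)).card := by
  apply Finset.card_bij' (fun σ _ => Equiv.swap v w * σ) (fun σ _ => Equiv.swap v w * σ)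
  · intro σ hσ
    rw [Finset.mem_filter] at hσ ⊢
    obtain ⟨-, h1, h2⟩ := hσ
    refine ⟨Finset.mem_univ _, ?_, ?_⟩
    · simp [Equiv.Perm.mul_apply, h1]
    · intro x hx
      simp [Equiv.Perm.mul_apply, h2 x hx,
        Equiv.swap_apply_of_ne_of_ne (hv x hx) (hw x hx)]
  · intro σ hσ
    rw [Finset.mem_filter] at hσ ⊢
    obtain ⟨-, h1, h2⟩ := hσ
    refine ⟨Finset.mem_univ _, ?_, ?_⟩
    · simp [Equiv.Perm.mul_apply, h1]
    · intro x hx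
      simp [Equiv.Perm.mul_apply, h2 x hx,
        Equiv.swap_apply_of_ne_of_ne (hv x hx) (hw x hx)]
  · intro σ _
    rw [← mul_assoc, Equiv.swap_mul_self, one_mul]
  · intro σ _
    rw [← mul_assoc, Equiv.swap_mul_self, one_mul]

private lemma sw_count_extend {n : ℕ} (s : Finset (Fin n)) :
    ∀ f : Fin n → Fin n, Set.InjOn f s →
    (Finset.univ.filter (fun σ : Equiv.Perm (Fin n) => ∀ x ∈ s, σ x = f x)).card
      = (n - s.card).factorial := by
  induction s using Finset.induction_on with
  | empty =>
      intro f _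
      simp [Finset.card_univ, Fintype.card_perm]
  | @insert a s ha ih =>
      intro f hf
      have hsub : (s : Set (Fin n)) ⊆ (insert a s : Finset (Fin n)) := by
        intro x hx; simp at hx ⊢; tauto
      have hinj : Set.InjOn f s := hf.mono hsub
      have hpart : (Finset.univ.filter (fun σ : Equiv.Perm (Fin n) => ∀ x ∈ s, σ x = f x)).card
          = ∑ v : Fin n, (Finset.univ.filter
              (fun σ : Equiv.Perm (Fin n) => σ a = v ∧ ∀ x ∈ s, σ x = f x)).card := by
        rw [Finset.card_eq_sum_card_fiberwise
          (f := fun σ : Equiv.Perm (Fin n) => σ a) (t := Finset.univ) (fun x _ => Finset.mem_univ _)]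
        refine Finset.sum_congr rfl (fun v _ => ?_)
        rw [Finset.filter_filter]
        congr 1
        ext σ
        simp only [Finset.mem_filter]
        tauto
      -- fibers with v in the image of s are empty
      have hzero : ∀ v ∈ s.image f, (Finset.univ.filter
          (fun σ : Equiv.Perm (Fin n) => σ a = v ∧ ∀ x ∈ s, σ x = f x)).card = 0 := by
        intro v hv
        obtain ⟨x, hx, hfx⟩ := Finset.mem_image.1 hv
        rw [Finset.card_eq_zero, Finset.eq_empty_iff_forall_notMem]
        intro σ hσ
        rw [Finset.mem_filter] at hσ
        obtain ⟨-, h1, h2⟩ := hσ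
        have : σ a = σ x := by rw [h1, h2 x hx, hfx]
        have : a = x := σ.injective this
        exact ha (this ▸ hx)
      -- fibers with v not in the image are all equal to the fiber at f a
      have hfa : f a ∉ s.image f := by
        intro hmem
        obtain ⟨x, hx, hfx⟩ := Finset.mem_image.1 hmem
        have : x = a := hf (hsub hx) (by simp) hfx
        exact ha (this ▸ hx)
      have heq : ∀ v ∉ s.image f, (Finset.univ.filter
          (fun σ : Equiv.Perm (Fin n) => σ a = v ∧ ∀ x ∈ s, σ x = f x)).card
          = (Finset.univ.filter
          (fun σ : Equiv.Perm (Fin n) => σ a = f a ∧ ∀ x ∈ s, σ x = f x)).card := by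
        intro v hv
        apply sw_fiber_swap
        · intro x hx h
          exact hv (Finset.mem_image.2 ⟨x, hx, h⟩)
        · intro x hx h
          exact hfa (Finset.mem_image.2 ⟨x, hx, h⟩)
      have hcards : s.card < n := by
        have h1 : (insert a s).card ≤ n := by
          simpa [Finset.card_univ] using Finset.card_le_univ (insert a s)
        rw [Finset.card_insert_of_notMem ha] at h1
        omega
      have himg : (s.image f).card = s.card := Finset.card_image_of_injOn hinj
      have hsum : ∑ v : Fin n, (Finset.univ.filter
              (fun σ : Equiv.Perm (Fin n) => σ a = v ∧ ∀ x ∈ s, σ x = f x)).card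
          = (n - s.card) * (Finset.univ.filter
          (fun σ : Equiv.Perm (Fin n) => σ a = f a ∧ ∀ x ∈ s, σ x = f x)).card := by
        rw [← Finset.sum_filter_add_sum_filter_not Finset.univ (fun v => v ∈ s.image f)]
        have h1 : ∑ v ∈ Finset.univ.filter (fun v => v ∈ s.image f),
            (Finset.univ.filter
              (fun σ : Equiv.Perm (Fin n) => σ a = v ∧ ∀ x ∈ s, σ x = f x)).card = 0 :=
          Finset.sum_eq_zero (fun v hv => hzero v (Finset.mem_filter.1 hv).2)
        have hcardc : (Finset.univ.filter (fun v => ¬ v ∈ s.image f)).card = n - s.card := by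
          have := Finset.card_filter_add_card_filter_not
            (s := (Finset.univ : Finset (Fin n))) (p := fun v => v ∈ s.image f)
          have himg2 : (Finset.univ.filter (fun v => v ∈ s.image f)).card = s.card := by
            rw [← himg]
            congr 1
            ext v
            simp
          have hu : (Finset.univ : Finset (Fin n)).card = n := by simp
          omega
        have h2 : ∑ v ∈ Finset.univ.filter (fun v => ¬ v ∈ s.image f),
            (Finset.univ.filter
              (fun σ : Equiv.Perm (Fin n) => σ a = v ∧ ∀ x ∈ s, σ x = f x)).card
            = (n - s.card) * (Finset.univ.filter
              (fun σ : Equiv.Perm (Fin n) => σ a = f a ∧ ∀ x ∈ s, σ x = f x)).card := by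
          rw [Finset.sum_congr rfl (fun v hv => heq v (Finset.mem_filter.1 hv).2),
            Finset.sum_const, smul_eq_mul, hcardc]
        rw [h1, h2, zero_add]
      have htarget : (Finset.univ.filter
          (fun σ : Equiv.Perm (Fin n) => σ a = f a ∧ ∀ x ∈ s, σ x = f x)).card
          = (Finset.univ.filter
          (fun σ : Equiv.Perm (Fin n) => ∀ x ∈ insert a s, σ x = f x)).card := by
        congr 1
        apply Finset.filter_congr
        intro σ _
        simp [Finset.forall_mem_insert]
      have hih := ih f hinj
      rw [hpart, hsum, htarget] at hih
      rw [Finset.card_insert_of_notMem ha]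
      have hfac : (n - s.card).factorial = (n - s.card) * (n - (s.card + 1)).factorial := by
        rw [show n - s.card = (n - (s.card + 1)) + 1 from by omega, Nat.factorial_succ]
      rw [hfac] at hih
      have hpos : 0 < n - s.card := by omega
      exact Nat.eq_of_mul_eq_mul_left hpos hih

private lemma sw_count_eq3 {n : ℕ} (i₁ i₂ i₃ : Fin n)
    (h12 : i₁ ≠ i₂) (h13 : i₁ ≠ i₃) (h23 : i₂ ≠ i₃) (v₁ v₂ v₃ : Fin n) :
    (Finset.univ.filter (fun σ : Equiv.Perm (Fin n) =>
        σ i₁ = v₁ ∧ σ i₂ = v₂ ∧ σ i₃ = v₃)).card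
      = if v₁ ≠ v₂ ∧ v₁ ≠ v₃ ∧ v₂ ≠ v₃ then (n - 3).factorial else 0 := by
  by_cases hd : v₁ ≠ v₂ ∧ v₁ ≠ v₃ ∧ v₂ ≠ v₃
  · rw [if_pos hd]
    obtain ⟨hv12, hv13, hv23⟩ := hd
    set f : Fin n → Fin n := fun x => if x = i₁ then v₁ else if x = i₂ then v₂ else v₃ with hfdef
    have hcard3 : ({i₁, i₂, i₃} : Finset (Fin n)).card = 3 := by
      rw [Finset.card_insert_of_notMem (by simp [h12, h13]),
        Finset.card_insert_of_notMem (by simp [h23]), Finset.card_singleton]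
    have e1 : f i₁ = v₁ := by simp [hfdef]
    have e2 : f i₂ = v₂ := by simp [hfdef, Ne.symm h12]
    have e3 : f i₃ = v₃ := by simp [hfdef, Ne.symm h13, Ne.symm h23]
    have hinj : Set.InjOn f ({i₁, i₂, i₃} : Finset (Fin n)) := by
      intro x hx y hy hxy
      simp only [Finset.coe_insert, Finset.coe_singleton, Set.mem_insert_iff,
        Set.mem_singleton_iff] at hx hy
      rcases hx with rfl | rfl | rfl <;> rcases hy with rfl | rfl | rfl <;>
        simp only [e1, e2, e3] at hxy <;> simp_all
    have := sw_count_extend ({i₁, i₂, i₃} : Finset (Fin n)) f hinj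
    rw [hcard3] at this
    rw [← this]
    congr 1
    apply Finset.filter_congr
    intro σ _
    constructor
    · rintro ⟨a1, a2, a3⟩ x hx
      simp only [Finset.mem_insert, Finset.mem_singleton] at hx
      rcases hx with rfl | rfl | rfl
      · rw [a1, e1]
      · rw [a2, e2]
      · rw [a3, e3]
    · intro h
      exact ⟨by rw [h i₁ (by simp), e1], by rw [h i₂ (by simp), e2], by rw [h i₃ (by simp), e3]⟩
  · rw [if_neg hd, Finset.card_eq_zero, Finset.eq_empty_iff_forall_notMem]
    intro σ hσ
    rw [Finset.mem_filter] at hσ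
    obtain ⟨-, a1, a2, a3⟩ := hσ
    apply hd
    refine ⟨?_, ?_, ?_⟩
    · intro h; exact h12 (σ.injective (by rw [a1, a2, h]))
    · intro h; exact h13 (σ.injective (by rw [a1, a3, h]))
    · intro h; exact h23 (σ.injective (by rw [a2, a3, h]))

private lemma sw_count_mem3 {n : ℕ} (i₁ i₂ i₃ : Fin n)
    (h12 : i₁ ≠ i₂) (h13 : i₁ ≠ i₃) (h23 : i₂ ≠ i₃)
    (S₁ S₂ S₃ : Finset (Fin n)) (h21 : S₂ ⊆ S₁) (h32 : S₃ ⊆ S₂) :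
    (Finset.univ.filter (fun σ : Equiv.Perm (Fin n) =>
        σ i₁ ∈ S₁ ∧ σ i₂ ∈ S₂ ∧ σ i₃ ∈ S₃)).card
      = S₃.card * ((S₂.card - 1) * ((S₁.card - 2) * (n - 3).factorial)) := by
  rw [Finset.card_eq_sum_card_fiberwise
    (f := fun σ : Equiv.Perm (Fin n) => (σ i₃, σ i₂, σ i₁))
    (t := S₃ ×ˢ (S₂ ×ˢ S₁))
    (by intro σ hσ
        rw [Finset.mem_coe, Finset.mem_filter] at hσ
        simp [Finset.mem_product, hσ.2.1, hσ.2.2.1, hσ.2.2.2])]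
  rw [Finset.sum_product]
  have hfib : ∀ v₃ ∈ S₃, ∀ v₂ ∈ S₂, ∀ v₁ ∈ S₁,
      ((Finset.univ.filter (fun σ : Equiv.Perm (Fin n) =>
        σ i₁ ∈ S₁ ∧ σ i₂ ∈ S₂ ∧ σ i₃ ∈ S₃)).filter
          (fun σ => (σ i₃, σ i₂, σ i₁) = (v₃, v₂, v₁))).card
      = if v₁ ≠ v₂ ∧ v₁ ≠ v₃ ∧ v₂ ≠ v₃ then (n - 3).factorial else 0 := by
    intro v₃ hv₃ v₂ hv₂ v₁ hv₁
    rw [Finset.filter_filter, ← sw_count_eq3 i₁ i₂ i₃ h12 h13 h23 v₁ v₂ v₃]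
    congr 1
    apply Finset.filter_congr
    intro σ _
    simp only [Prod.mk.injEq]
    constructor
    · rintro ⟨-, h3, h2, h1⟩; exact ⟨h1, h2, h3⟩
    · rintro ⟨h1, h2, h3⟩
      exact ⟨⟨h1 ▸ hv₁, h2 ▸ hv₂, h3 ▸ hv₃⟩, h3, h2, h1⟩
  calc (∑ v₃ ∈ S₃, ∑ p ∈ S₂ ×ˢ S₁,
        ((Finset.univ.filter (fun σ : Equiv.Perm (Fin n) =>
          σ i₁ ∈ S₁ ∧ σ i₂ ∈ S₂ ∧ σ i₃ ∈ S₃)).filter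
            (fun σ => (σ i₃, σ i₂, σ i₁) = (v₃, p.1, p.2))).card)
      = ∑ v₃ ∈ S₃, ((S₂.card - 1) * ((S₁.card - 2) * (n - 3).factorial)) := by
        refine Finset.sum_congr rfl (fun v₃ hv₃ => ?_)
        rw [Finset.sum_product]
        calc (∑ v₂ ∈ S₂, ∑ v₁ ∈ S₁,
            ((Finset.univ.filter (fun σ : Equiv.Perm (Fin n) =>
              σ i₁ ∈ S₁ ∧ σ i₂ ∈ S₂ ∧ σ i₃ ∈ S₃)).filter
                (fun σ => (σ i₃, σ i₂, σ i₁) = (v₃, v₂, v₁))).card)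
            = ∑ v₂ ∈ S₂, ∑ v₁ ∈ S₁,
              (if v₁ ≠ v₂ ∧ v₁ ≠ v₃ ∧ v₂ ≠ v₃ then (n - 3).factorial else 0) := by
              refine Finset.sum_congr rfl (fun v₂ hv₂ => ?_)
              exact Finset.sum_congr rfl (fun v₁ hv₁ => hfib v₃ hv₃ v₂ hv₂ v₁ hv₁)
          _ = (S₂.card - 1) * ((S₁.card - 2) * (n - 3).factorial) := by
              rw [← Finset.add_sum_erase _ _ (h32 hv₃)]
              have hz : (∑ v₁ ∈ S₁,
                  (if v₁ ≠ v₃ ∧ v₁ ≠ v₃ ∧ v₃ ≠ v₃ then (n - 3).factorial else 0)) = 0 := by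
                apply Finset.sum_eq_zero
                intro v₁ _
                simp
              rw [hz, zero_add]
              have hinner : ∀ v₂ ∈ S₂.erase v₃,
                  (∑ v₁ ∈ S₁, (if v₁ ≠ v₂ ∧ v₁ ≠ v₃ ∧ v₂ ≠ v₃ then (n - 3).factorial else 0))
                    = (S₁.card - 2) * (n - 3).factorial := by
                intro v₂ hv₂
                have hne : v₂ ≠ v₃ := Finset.ne_of_mem_erase hv₂
                have hv₂S₁ : v₂ ∈ S₁ := h21 (Finset.mem_of_mem_erase hv₂)
                have hv₃S₁ : v₃ ∈ S₁ := h21 (h32 hv₃)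
                rw [Finset.sum_ite, Finset.sum_const_zero, add_zero, Finset.sum_const,
                  smul_eq_mul]
                congr 1
                have : S₁.filter (fun v₁ => v₁ ≠ v₂ ∧ v₁ ≠ v₃ ∧ v₂ ≠ v₃)
                    = S₁ \ {v₂, v₃} := by
                  ext v₁
                  simp only [Finset.mem_filter, Finset.mem_sdiff, Finset.mem_insert,
                    Finset.mem_singleton]
                  tauto
                rw [this, Finset.card_sdiff_of_subset (by
                  intro x hx
                  simp only [Finset.mem_insert, Finset.mem_singleton] at hx
                  rcases hx with rfl | rfl
                  · exact hv₂S₁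
                  · exact hv₃S₁)]
                rw [Finset.card_pair hne]
              rw [Finset.sum_congr rfl hinner, Finset.sum_const, smul_eq_mul,
                Finset.card_erase_of_mem (h32 hv₃)]
    _ = S₃.card * ((S₂.card - 1) * ((S₁.card - 2) * (n - 3).factorial)) := by
        rw [Finset.sum_const, smul_eq_mul]

private lemma sw_exists_third {n : ℕ} (hn : 3 ≤ n) (i₁ i₂ : Fin n) :
    ∃ z : Fin n, z ≠ i₁ ∧ z ≠ i₂ := by
  have hcard : ({i₁, i₂} : Finset (Fin n)).card ≤ 2 :=
    Finset.card_insert_le _ _ |>.trans (by simp)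
  have hne : (({i₁, i₂} : Finset (Fin n))ᶜ).Nonempty := by
    rw [← Finset.card_pos, Finset.card_compl, Fintype.card_fin]
    omega
  obtain ⟨z, hz⟩ := hne
  rw [Finset.mem_compl, Finset.mem_insert, Finset.mem_singleton] at hz
  exact ⟨z, fun h => hz (Or.inl h), fun h => hz (Or.inr h)⟩

private lemma sw_count_mem2 {n : ℕ} (hn : 3 ≤ n) (i₁ i₂ : Fin n) (h12 : i₁ ≠ i₂)
    (S₁ S₂ : Finset (Fin n)) (h21 : S₂ ⊆ S₁) :
    (Finset.univ.filter (fun σ : Equiv.Perm (Fin n) =>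
        σ i₁ ∈ S₁ ∧ σ i₂ ∈ S₂)).card
      = S₂.card * ((S₁.card - 1) * (n - 2).factorial) := by
  obtain ⟨z, hz1, hz2⟩ := sw_exists_third hn i₁ i₂
  have h := sw_count_mem3 z i₁ i₂ (Ne.symm (fun h => hz1 h.symm)) (Ne.symm (fun h => hz2 h.symm)) h12
    Finset.univ S₁ S₂ (Finset.subset_univ _) h21
  have hfe : (Finset.univ.filter (fun σ : Equiv.Perm (Fin n) =>
      σ z ∈ (Finset.univ : Finset (Fin n)) ∧ σ i₁ ∈ S₁ ∧ σ i₂ ∈ S₂))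
      = (Finset.univ.filter (fun σ : Equiv.Perm (Fin n) => σ i₁ ∈ S₁ ∧ σ i₂ ∈ S₂)) := by
    apply Finset.filter_congr
    intro σ _
    simp
  rw [hfe] at h
  rw [h, Finset.card_univ, Fintype.card_fin]
  have : (n - 2).factorial = (n - 2) * (n - 3).factorial := by
    rw [show n - 2 = (n - 3) + 1 from by omega, Nat.factorial_succ]
  rw [this]

private lemma sw_count_mem1 {n : ℕ} (hn : 3 ≤ n) (i : Fin n) (S : Finset (Fin n)) :
    (Finset.univ.filter (fun σ : Equiv.Perm (Fin n) => σ i ∈ S)).card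
      = S.card * (n - 1).factorial := by
  obtain ⟨z, hz1, _⟩ := sw_exists_third hn i i
  have h := sw_count_mem2 hn z i hz1 Finset.univ S (Finset.subset_univ _)
  have hfe : (Finset.univ.filter (fun σ : Equiv.Perm (Fin n) =>
      σ z ∈ (Finset.univ : Finset (Fin n)) ∧ σ i ∈ S))
      = (Finset.univ.filter (fun σ : Equiv.Perm (Fin n) => σ i ∈ S)) := by
    apply Finset.filter_congr
    intro σ _
    simp
  rw [hfe] at h
  rw [h, Finset.card_univ, Fintype.card_fin]
  have : (n - 1).factorial = (n - 1) * (n - 2).factorial := by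
    rw [show n - 1 = (n - 2) + 1 from by omega, Nat.factorial_succ]
  rw [this]

private def swSet (I t : ℕ) : Finset (Fin I) := Finset.univ.filter (fun v => t ≤ (v : ℕ))

private lemma mem_swSet {I t : ℕ} {v : Fin I} : v ∈ swSet I t ↔ t ≤ (v : ℕ) := by
  simp [swSet]

private lemma swSet_card (I t : ℕ) : (swSet I t).card = I - t := by
  have h : (swSet I t).card = (Finset.Ico t I).card := by
    refine Finset.card_bij (fun v _ => (v : ℕ)) ?_ ?_ ?_
    · intro v hv
      rw [mem_swSet] at hv
      simp [Finset.mem_Ico, hv, v.isLt]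
    · intro v _ w _ h
      exact Fin.val_injective h
    · intro m hm
      rw [Finset.mem_Ico] at hm
      exact ⟨⟨m, hm.2⟩, by simp [mem_swSet, hm.1], rfl⟩
  rw [h, Nat.card_Ico]

private lemma swSet_subset (I : ℕ) {t u : ℕ} (h : t ≤ u) : swSet I u ⊆ swSet I t := by
  intro v hv
  rw [mem_swSet] at hv ⊢
  omega

private lemma sw_swZ_eq_zero (I : ℕ) (T : ℕ → ℕ) (σ : Equiv.Perm (Fin I)) (x : Fin I) (j : ℕ) :
    swZ I T σ x j = 0 ↔ T j ≤ (σ x : ℕ) := by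
  unfold swZ
  split <;> omega

private lemma sw_facsplit (I : ℕ) (hI : 3 ≤ I) :
    I.factorial = I * ((I - 1) * ((I - 2) * (I - 3).factorial)) := by
  obtain ⟨m, rfl⟩ : ∃ m, I = m + 3 := ⟨I - 3, by omega⟩
  rw [show m + 3 - 1 = m + 2 from rfl, show m + 3 - 2 = m + 1 from rfl,
    show m + 3 - 3 = m from rfl]
  rw [show m + 3 = (m + 2) + 1 from rfl, Nat.factorial_succ,
    show m + 2 = (m + 1) + 1 from rfl, Nat.factorial_succ,
    show m + 1 = m + 1 from rfl, Nat.factorial_succ]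

private lemma sw_real1 (I w : ℕ) (hI : 3 ≤ I) (hw : w ≤ I - 1) :
    (((I - w) * (I - 1).factorial : ℕ) : ℝ) / (I.factorial : ℝ)
      = ((I : ℝ) - (w : ℝ)) / (I : ℝ) := by
  obtain ⟨m, rfl⟩ : ∃ m, I = m + 3 := ⟨I - 3, by omega⟩
  have hfac : ((m + 3).factorial : ℝ) = (m + 3 : ℕ) * ((m + 3 - 1).factorial : ℝ) := by
    rw [show m + 3 = (m + 2) + 1 from rfl, Nat.factorial_succ]
    push_cast
    ring
  have c1 : ((m + 3 - w : ℕ) : ℝ) = ((m : ℝ) + 3) - w := by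
    rw [Nat.cast_sub (by omega : w ≤ m + 3)]
    push_cast
    ring
  have d1 : ((m : ℝ) + 3) ≠ 0 := by positivity
  have d2 : (((m + 3 - 1).factorial : ℕ) : ℝ) ≠ 0 := by
    exact_mod_cast (Nat.factorial_pos _).ne'
  push_cast [hfac]
  rw [c1] at *
  push_cast at *
  field_simp

private lemma sw_real2 (I t u : ℕ) (hI : 3 ≤ I) (htu : t ≤ u) (hu : u ≤ I - 1) :
    (((I - u) * (((I - t) - 1) * (I - 2).factorial) : ℕ) : ℝ) / (I.factorial : ℝ)
      = (((I : ℝ) - (u : ℝ)) / (I : ℝ)) * (((I : ℝ) - (t : ℝ) - 1) / ((I : ℝ) - 1)) := by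
  obtain ⟨m, rfl⟩ : ∃ m, I = m + 3 := ⟨I - 3, by omega⟩
  have hfac : ((m + 3).factorial : ℝ)
      = ((m : ℝ) + 3) * (((m : ℝ) + 2) * ((m + 1).factorial : ℝ)) := by
    rw [show m + 3 = (m + 2) + 1 from rfl, Nat.factorial_succ,
      show m + 2 = (m + 1) + 1 from rfl, Nat.factorial_succ]
    push_cast
    ring
  have c1 : ((m + 3 - u : ℕ) : ℝ) = ((m : ℝ) + 3) - u := by
    rw [Nat.cast_sub (by omega : u ≤ m + 3)]; push_cast; ring
  have c2 : (((m + 3 - t) - 1 : ℕ) : ℝ) = ((m : ℝ) + 2) - t := by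
    rw [Nat.cast_sub (by omega : 1 ≤ m + 3 - t), Nat.cast_sub (by omega : t ≤ m + 3)]
    push_cast; ring
  have hfac2 : (m + 3 - 2) = m + 1 := rfl
  have d1 : ((m : ℝ) + 3) ≠ 0 := by positivity
  have d2 : (((m + 1).factorial : ℕ) : ℝ) ≠ 0 := by
    exact_mod_cast (Nat.factorial_pos _).ne'
  have d3 : ((m : ℝ) + 3) - 1 ≠ 0 := by
    have : (0 : ℝ) ≤ (m : ℝ) := Nat.cast_nonneg m
    intro h; linarith
  rw [hfac2]
  push_cast
  rw [c1, c2, hfac]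
  push_cast
  field_simp
  ring

private lemma sw_real3 (I t u w : ℕ) (hI : 3 ≤ I) (htu : t ≤ u) (huw : u ≤ w)
    (hw : w ≤ I - 1) :
    (((I - w) * (((I - u) - 1) * (((I - t) - 2) * (I - 3).factorial)) : ℕ) : ℝ)
        / (I.factorial : ℝ)
      = (((I : ℝ) - (w : ℝ)) / (I : ℝ)) * (((I : ℝ) - (u : ℝ) - 1) / ((I : ℝ) - 1))
          * (((I : ℝ) - (t : ℝ) - 2) / ((I : ℝ) - 2)) := by
  obtain ⟨m, rfl⟩ : ∃ m, I = m + 3 := ⟨I - 3, by omega⟩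
  have hfac3 : (m + 3 - 3) = m := rfl
  by_cases hdeg : t ≤ m + 1
  · have hfac : ((m + 3).factorial : ℝ)
        = ((m : ℝ) + 3) * (((m : ℝ) + 2) * (((m : ℝ) + 1) * (m.factorial : ℝ))) := by
      rw [show m + 3 = (m + 2) + 1 from rfl, Nat.factorial_succ,
        show m + 2 = (m + 1) + 1 from rfl, Nat.factorial_succ,
        show m + 1 = m + 1 from rfl, Nat.factorial_succ]
      push_cast
      ring
    have c1 : ((m + 3 - w : ℕ) : ℝ) = ((m : ℝ) + 3) - w := by
      rw [Nat.cast_sub (by omega : w ≤ m + 3)]; push_cast; ring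
    have c2 : (((m + 3 - u) - 1 : ℕ) : ℝ) = ((m : ℝ) + 2) - u := by
      rw [Nat.cast_sub (by omega : 1 ≤ m + 3 - u), Nat.cast_sub (by omega : u ≤ m + 3)]
      push_cast; ring
    have c3 : (((m + 3 - t) - 2 : ℕ) : ℝ) = ((m : ℝ) + 1) - t := by
      rw [Nat.cast_sub (by omega : 2 ≤ m + 3 - t), Nat.cast_sub (by omega : t ≤ m + 3)]
      push_cast; ring
    have d1 : ((m : ℝ) + 3) ≠ 0 := by positivity
    have d2 : ((m.factorial : ℕ) : ℝ) ≠ 0 := by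
      exact_mod_cast (Nat.factorial_pos _).ne'
    have hm0 : (0 : ℝ) ≤ (m : ℝ) := Nat.cast_nonneg m
    have d3 : ((m : ℝ) + 3) - 1 ≠ 0 := by intro h; linarith
    have d4 : ((m : ℝ) + 3) - 2 ≠ 0 := by intro h; linarith
    rw [hfac3]
    push_cast
    rw [c1, c2, c3, hfac]
    push_cast
    field_simp
    ring
  · -- degenerate: t = m + 2, hence u = w = m + 2, both sides vanish
    have ht : t = m + 2 := by omega
    have hu : u = m + 2 := by omega
    have hnum : (m + 3 - u) - 1 = 0 := by omega
    rw [hnum]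
    have hlhs : ((m + 3 - w) * (0 * (((m + 3 - t) - 2) * (m + 3 - 3).factorial)) : ℕ) = 0 := by
      simp
    rw [hlhs]
    have hrhs : ((m + 3 : ℕ) : ℝ) - (u : ℝ) - 1 = 0 := by
      rw [hu]; push_cast; ring
    rw [hrhs]
    simp

private lemma sw_prob_eq {n : ℕ} (p q : Equiv.Perm (Fin n) → Prop) [DecidablePred q]
    (h : ∀ σ, p σ ↔ q σ) :
    swProb n p = ((Finset.univ.filter q).card : ℝ) / (n.factorial : ℝ) := by
  unfold swProb
  have hc : (Finset.univ.filter p).card = (Finset.univ.filter q).card := by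
    congr 1
    ext σ
    simp only [Finset.mem_filter, Finset.mem_univ, true_and]
    exact h σ
  rw [hc]


theorem statement6
    (I J : ℕ) (hI : 2 ≤ I) (hJ : 1 ≤ J)
    (T : ℕ → ℕ)
    (hmono : ∀ j j', 1 ≤ j → j ≤ j' → j' ≤ J → T j ≤ T j')
    (hlb : ∀ j, 1 ≤ j → j ≤ J → 1 ≤ T j)
    (hub : ∀ j, 1 ≤ j → j ≤ J → T j ≤ I - 1)
    (hI3 : 3 ≤ I)
    (i i' k : Fin I) (hii' : i ≠ i') (hik : i ≠ k) (hi'k : i' ≠ k)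
    (a b c : ℕ) (ha1 : 1 ≤ a) (hab : a ≤ b) (hbc : b ≤ c) (hcJ : c ≤ J) :
    swProb I (fun σ => swZ I T σ i a = 0 ∧ swZ I T σ i' b = 0 ∧ swZ I T σ k c = 0)
      = (((I : ℝ) - (T c : ℝ)) / I) * (((I : ℝ) - (T b : ℝ) - 1) / ((I : ℝ) - 1)) *
          (((I : ℝ) - (T a : ℝ) - 2) / ((I : ℝ) - 2)) ∧
    swProb I (fun σ => swZ I T σ i a = 0 ∧ swZ I T σ i b = 0 ∧ swZ I T σ k c = 0)
      = (((I : ℝ) - (T c : ℝ)) / I) * (((I : ℝ) - (T b : ℝ) - 1) / ((I : ℝ) - 1)) ∧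
    swProb I (fun σ => swZ I T σ i a = 0 ∧ swZ I T σ i' b = 0 ∧ swZ I T σ i c = 0)
      = (((I : ℝ) - (T c : ℝ)) / I) * (((I : ℝ) - (T b : ℝ) - 1) / ((I : ℝ) - 1)) ∧
    swProb I (fun σ => swZ I T σ i a = 0 ∧ swZ I T σ i' b = 0 ∧ swZ I T σ i' c = 0)
      = (((I : ℝ) - (T c : ℝ)) / I) * (((I : ℝ) - (T a : ℝ) - 1) / ((I : ℝ) - 1)) ∧
    swProb I (fun σ => swZ I T σ i a = 0 ∧ swZ I T σ i b = 0 ∧ swZ I T σ i c = 0)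
      = ((I : ℝ) - (T c : ℝ)) / I := by
  have habJ : b ≤ J := hbc.trans hcJ
  have hb1 : 1 ≤ b := ha1.trans hab
  have hc1 : 1 ≤ c := hb1.trans hbc
  have htab : T a ≤ T b := hmono a b ha1 hab habJ
  have htbc : T b ≤ T c := hmono b c hb1 hbc hcJ
  have htac : T a ≤ T c := htab.trans htbc
  have hTa : T a ≤ I - 1 := hub a ha1 (hab.trans habJ)
  have hTb : T b ≤ I - 1 := hub b hb1 habJ
  have hTc : T c ≤ I - 1 := hub c hc1 hcJ
  refine ⟨?_, ?_, ?_, ?_, ?_⟩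
  · rw [sw_prob_eq (fun σ => swZ I T σ i a = 0 ∧ swZ I T σ i' b = 0 ∧ swZ I T σ k c = 0)
        (fun σ => σ i ∈ swSet I (T a) ∧ σ i' ∈ swSet I (T b) ∧ σ k ∈ swSet I (T c))
        (fun σ => by simp only [sw_swZ_eq_zero, mem_swSet]),
      sw_count_mem3 i i' k hii' hik hi'k _ _ _ (swSet_subset I htab) (swSet_subset I htbc),
      swSet_card, swSet_card, swSet_card]
    exact sw_real3 I (T a) (T b) (T c) hI3 htab htbc hTc
  · rw [sw_prob_eq (fun σ => swZ I T σ i a = 0 ∧ swZ I T σ i b = 0 ∧ swZ I T σ k c = 0)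
        (fun σ => σ i ∈ swSet I (T b) ∧ σ k ∈ swSet I (T c))
        (fun σ => by simp only [sw_swZ_eq_zero, mem_swSet]; omega),
      sw_count_mem2 hI3 i k hik _ _ (swSet_subset I htbc), swSet_card, swSet_card]
    exact sw_real2 I (T b) (T c) hI3 htbc hTc
  · rw [sw_prob_eq (fun σ => swZ I T σ i a = 0 ∧ swZ I T σ i' b = 0 ∧ swZ I T σ i c = 0)
        (fun σ => σ i' ∈ swSet I (T b) ∧ σ i ∈ swSet I (T c))
        (fun σ => by simp only [sw_swZ_eq_zero, mem_swSet]; omega),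
      sw_count_mem2 hI3 i' i (Ne.symm hii') _ _ (swSet_subset I htbc), swSet_card, swSet_card]
    exact sw_real2 I (T b) (T c) hI3 htbc hTc
  · rw [sw_prob_eq (fun σ => swZ I T σ i a = 0 ∧ swZ I T σ i' b = 0 ∧ swZ I T σ i' c = 0)
        (fun σ => σ i ∈ swSet I (T a) ∧ σ i' ∈ swSet I (T c))
        (fun σ => by simp only [sw_swZ_eq_zero, mem_swSet]; omega),
      sw_count_mem2 hI3 i i' hii' _ _ (swSet_subset I htac), swSet_card, swSet_card]
    exact sw_real2 I (T a) (T c) hI3 htac hTc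
  · rw [sw_prob_eq (fun σ => swZ I T σ i a = 0 ∧ swZ I T σ i b = 0 ∧ swZ I T σ i c = 0)
        (fun σ => σ i ∈ swSet I (T c))
        (fun σ => by simp only [sw_swZ_eq_zero, mem_swSet]; omega),
      sw_count_mem1 hI3 i, swSet_card]
    exact sw_real1 I (T c) hI3 hTc
end
end
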